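/- arXiv:2010.10762 — 7 statements merged into one kernel-verified Lean document; each statement's English description precedes it below -/
import Mathlib

section
/- Let C be a binary linear [k+t, k] code with systematic generator matrix G = [I_k | A], and let S be a nonempty subset of {1,...,k}. The codeword c^S is non-minimal if and only if there exists a nonempty proper subset T ⊊ S with supp(c^T_I) ⊆ supp(c^S_I). -/
open Finset

/-- The support of a vector `x ∈ F_2^n`: the set of nonzero coordinates. -/
def supp {n : ℕ} (x : Fin n → ZMod 2) : Set (Fin n) := {i | x i ≠ 0}

/-- `c` is a minimal codeword of the linear code (subspace) `C ≤ F_2^n`: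
it is a nonzero codeword and no nonzero codeword has support properly contained in `supp c`. -/
def IsMinimal {n : ℕ} (C : Submodule (ZMod 2) (Fin n → ZMod 2)) (c : Fin n → ZMod 2) : Prop :=
  c ∈ C ∧ c ≠ 0 ∧ ∀ c' ∈ C, c' ≠ 0 → ¬ supp c' ⊂ supp c

/-- `M(C)`: the number of minimal codewords of `C`. -/
noncomputable def Mcode {n : ℕ} (C : Submodule (ZMod 2) (Fin n → ZMod 2)) : ℕ :=
  Set.ncard {c | IsMinimal C c}

/-- The `i`-th row `g^i` of the systematic generator matrix `G = [I_k | A]`. -/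
def row {k t : ℕ} (A : Fin k → Fin t → ZMod 2) (i : Fin k) : Fin (k + t) → ZMod 2 :=
  Fin.append (Pi.single i 1) (A i)

/-- The binary linear `[k+t, k]` code with systematic generator matrix `G = [I_k | A]`. -/
def genCode {k t : ℕ} (A : Fin k → Fin t → ZMod 2) :
    Submodule (ZMod 2) (Fin (k + t) → ZMod 2) :=
  Submodule.span (ZMod 2) (Set.range (row A))

/-- `c^S = ∑_{i ∈ S} g^i`. -/
def cS {k t : ℕ} (A : Fin k → Fin t → ZMod 2) (S : Finset (Fin k)) : Fin (k + t) → ZMod 2 :=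
  ∑ i ∈ S, row A i

/-- `c_I`: the restriction of a codeword to its last `t` coordinates (the information bits). -/
def infoBits {k t : ℕ} (c : Fin (k + t) → ZMod 2) : Fin t → ZMod 2 :=
  fun j => c (Fin.natAdd k j)

/-- `a_τ(A)` : the number of indices `i` with `g^i_I = A i = τ`. -/
def aCount {k t : ℕ} (A : Fin k → Fin t → ZMod 2) (τ : Fin t → ZMod 2) : ℕ :=
  (Finset.univ.filter fun i => A i = τ).card

/-- `M_2(n, k)`: the maximum of `M(C)` over all binary linear `[n, k]` codes `C`. -/
noncomputable def M2 (n k : ℕ) : ℕ :=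
  sSup {m | ∃ C : Submodule (ZMod 2) (Fin n → ZMod 2),
    Module.finrank (ZMod 2) C = k ∧ Mcode C = m}


lemma cS_castAdd {k t : ℕ} (A : Fin k → Fin t → ZMod 2) (S : Finset (Fin k)) (i : Fin k) :
    cS A S (Fin.castAdd t i) = if i ∈ S then 1 else 0 := by
  unfold cS
  rw [Finset.sum_apply]
  simp only [row, Fin.append_left]
  rw [Finset.sum_pi_single]

lemma cS_mem {k t : ℕ} (A : Fin k → Fin t → ZMod 2) (S : Finset (Fin k)) :
    cS A S ∈ genCode A :=
  Submodule.sum_mem _ fun i _ => Submodule.subset_span ⟨i, rfl⟩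

lemma cS_ne_zero {k t : ℕ} (A : Fin k → Fin t → ZMod 2) {S : Finset (Fin k)}
    (hS : S.Nonempty) : cS A S ≠ 0 := by
  obtain ⟨i, hi⟩ := hS
  intro h
  have := cS_castAdd A S i
  rw [h, if_pos hi] at this
  simp at this

lemma mem_genCode {k t : ℕ} {A : Fin k → Fin t → ZMod 2} {c : Fin (k + t) → ZMod 2}
    (hc : c ∈ genCode A) : ∃ T : Finset (Fin k), c = cS A T := by
  rw [genCode, Submodule.mem_span_range_iff_exists_fun] at hc
  obtain ⟨f, hf⟩ := hc
  refine ⟨Finset.univ.filter fun i => f i ≠ 0, ?_⟩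
  rw [← hf, cS]
  rw [Finset.sum_filter]
  apply Finset.sum_congr rfl
  intro i _
  have : ∀ a : ZMod 2, a = 0 ∨ a = 1 := by decide
  rcases this (f i) with h | h <;> simp [h]

lemma mem_supp_castAdd {k t : ℕ} (A : Fin k → Fin t → ZMod 2) (S : Finset (Fin k)) (i : Fin k) :
    Fin.castAdd t i ∈ supp (cS A S) ↔ i ∈ S := by
  simp only [supp, Set.mem_setOf_eq, cS_castAdd]
  by_cases h : i ∈ S <;> simp [h]

theorem stmt1 (k t : ℕ) (A : Fin k → Fin t → ZMod 2) (S : Finset (Fin k)) (hS : S.Nonempty) :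
    ¬ IsMinimal (genCode A) (cS A S) ↔
      ∃ T : Finset (Fin k), T.Nonempty ∧ T ⊂ S ∧
        supp (infoBits (cS A T)) ⊆ supp (infoBits (cS A S)) := by
  constructor
  · intro h
    have h' : ¬ (∀ c' ∈ genCode A, c' ≠ 0 → ¬ supp c' ⊂ supp (cS A S)) :=
      fun hm => h ⟨cS_mem A S, cS_ne_zero A hS, hm⟩
    push_neg at h'
    obtain ⟨c', hc'C, hc'0, hsub⟩ := h'
    obtain ⟨T, rfl⟩ := mem_genCode hc'C
    have hTne : T.Nonempty := by
      rcases T.eq_empty_or_nonempty with h0 | h0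
      · exfalso; apply hc'0; simp [h0, cS]
      · exact h0
    have hTsub : T ⊆ S := by
      intro i hi
      exact (mem_supp_castAdd A S i).mp (hsub.1 ((mem_supp_castAdd A T i).mpr hi))
    refine ⟨T, hTne, ⟨hTsub, ?_⟩, ?_⟩
    · intro hST
      have hTS : T = S := le_antisymm hTsub hST
      subst hTS
      exact hsub.2 hsub.1
    · intro j hj
      exact hsub.1 hj
  · rintro ⟨T, hTne, hTS, hinfo⟩
    rintro ⟨-, -, hmin⟩
    apply hmin (cS A T) (cS_mem A T) (cS_ne_zero A hTne)
    constructor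
    · intro x
      induction x using Fin.addCases with
      | left i =>
        intro hx
        exact (mem_supp_castAdd A S i).mpr (hTS.1 ((mem_supp_castAdd A T i).mp hx))
      | right j =>
        intro hx
        exact hinfo hx
    · intro hcon
      obtain ⟨i, hiS, hiT⟩ := Finset.exists_of_ssubset hTS
      exact hiT ((mem_supp_castAdd A T i).mp (hcon ((mem_supp_castAdd A S i).mpr hiS)))
end

section
/- For all positive integers k and t, M_2(k+t, k) ≤ Σ_{i=1}^{t+1} C(k+t, i), where C(·,·) denotes the binomial coefficient. -/
open Finset

/-!
Over `F_2` a vector is determined by its support, and a minimal codeword `c` of an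
`[n, k]` code `C` has Hamming weight at most `n - k + 1`: the codewords vanishing
wherever `c` does have support inside `supp c`, so by minimality they are only `0` and `c`;
restriction to the `n - wt c` zero coordinates of `c` therefore has kernel of dimension
at most `1`, whence `k ≤ n - wt c + 1`. Sending a minimal codeword to its support thus
injects the minimal codewords into the nonempty subsets of `Fin n` of size at most
`n - k + 1`.
-/

open Module

lemma eq_of_supp_eq {n : ℕ} {x y : Fin n → ZMod 2} (h : supp x = supp y) : x = y := by
  have key : ∀ a b : ZMod 2, (a ≠ 0 ↔ b ≠ 0) → a = b := by decide
  funext i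
  exact key _ _ (Set.ext_iff.mp h i)

namespace IsMinimal

variable {n : ℕ} {C : Submodule (ZMod 2) (Fin n → ZMod 2)} {c : Fin n → ZMod 2}

lemma eq_zero_or_eq_of_supp_subset (hc : IsMinimal C c) {x : Fin n → ZMod 2} (hx : x ∈ C)
    (hsub : supp x ⊆ supp c) : x = 0 ∨ x = c := by
  by_contra! h
  exact hc.2.2 x hx h.1 (hsub.ssubset_of_ne fun hs => h.2 (eq_of_supp_eq hs))

lemma hammingNorm_add_finrank_le (hc : IsMinimal C c) :
    hammingNorm c + finrank (ZMod 2) C ≤ n + 1 := by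
  classical
  let restrict : C →ₗ[ZMod 2] ({i // c i = 0} → ZMod 2) :=
    (LinearMap.funLeft (ZMod 2) (ZMod 2) Subtype.val).comp C.subtype
  have hker : LinearMap.ker restrict ≤ (ZMod 2) ∙ (⟨c, hc.1⟩ : C) := by
    intro x hx
    have hsub : supp (x : Fin n → ZMod 2) ⊆ supp c := fun i hi hci =>
      hi (congrFun (LinearMap.mem_ker.mp hx) ⟨i, hci⟩)
    rcases hc.eq_zero_or_eq_of_supp_subset x.2 hsub with h | h
    · simp [show x = 0 from Subtype.ext h]
    · simp [show x = ⟨c, hc.1⟩ from Subtype.ext h, Submodule.mem_span_singleton_self]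
  have hker_le : finrank (ZMod 2) (LinearMap.ker restrict) ≤ 1 :=
    (Submodule.finrank_mono hker).trans
      (finrank_span_singleton fun h => hc.2.1 (congrArg Subtype.val h)).le
  have hrange_le : finrank (ZMod 2) (LinearMap.range restrict) ≤ #{i | c i = 0} :=
    (Submodule.finrank_le _).trans_eq (by simp [Fintype.card_subtype])
  have hsplit : #{i | c i = 0} + hammingNorm c = n := by
    rw [hammingNorm, card_filter_add_card_filter_not, card_univ, Fintype.card_fin]
  have := LinearMap.finrank_range_add_finrank_ker restrict
  omega

end IsMinimal

lemma Mcode_le_sum_choose {n : ℕ} (C : Submodule (ZMod 2) (Fin n → ZMod 2)) :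
    Mcode C ≤ ∑ i ∈ Icc 1 (n + 1 - finrank (ZMod 2) C), n.choose i := by
  classical
  set m := n + 1 - finrank (ZMod 2) C
  have hfin : {c | IsMinimal C c}.Finite := Set.toFinite _
  rw [Mcode, Set.ncard_eq_toFinset_card _ hfin]
  calc #hfin.toFinset
      ≤ #((Icc 1 m).biUnion fun i => powersetCard i (univ : Finset (Fin n))) := by
        refine card_le_card_of_injOn (fun c => ({i | c i ≠ 0} : Finset (Fin n)))
          (fun c hc => ?_) ?_
        · replace hc : IsMinimal C c := by simpa using hc
          have hpos := hammingNorm_pos_iff.mpr hc.2.1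
          have hle := hc.hammingNorm_add_finrank_le
          exact mem_biUnion.mpr ⟨hammingNorm c, mem_Icc.mpr ⟨hpos, by omega⟩,
            mem_powersetCard.mpr ⟨subset_univ _, rfl⟩⟩
        · intro c _ c' _ h
          exact eq_of_supp_eq (by simpa [supp, Set.ext_iff] using Finset.ext_iff.mp h)
    _ ≤ ∑ i ∈ Icc 1 m, #(powersetCard i (univ : Finset (Fin n))) := card_biUnion_le
    _ = ∑ i ∈ Icc 1 m, n.choose i := by simp

theorem stmt3_general (k t : ℕ) :
    M2 (k + t) k ≤ ∑ i ∈ Finset.Icc 1 (t + 1), (k + t).choose i := by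
  refine csSup_le' ?_
  rintro _ ⟨C, hC, rfl⟩
  have h := Mcode_le_sum_choose C
  rwa [hC, show k + t + 1 - k = t + 1 by omega] at h

theorem stmt3 (k t : ℕ) (hk : 0 < k) (ht : 0 < t) :
    M2 (k + t) k ≤ ∑ i ∈ Finset.Icc 1 (t + 1), (k + t).choose i :=
  stmt3_general k t
end

section
/- Let G = [I_k | A] be a systematic generator matrix of a binary linear [k+t, k] code C, and let 1 ≤ i ≤ k be an index such that the information bits g^i_I of the i-th row are all zero. Let C' be the binary linear [k+t, k-1] code spanned by the remaining k-1 rows of G. Then M(C) = M(C') + 1. -/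
open Finset

section Aux
variable {k t : ℕ} (A : Fin k → Fin t → ZMod 2) (i : Fin k)

lemma zmod2_eq_one {x : ZMod 2} (h : x ≠ 0) : x = 1 := by revert h; revert x; decide

lemma row_apply_castAdd (j m : Fin k) :
    row A j (Fin.castAdd t m) = if m = j then 1 else 0 := by
  simp [row, Fin.append_left, Pi.single_apply]

lemma coordC' (c : Fin (k+t) → ZMod 2)
    (hc : c ∈ Submodule.span (ZMod 2) (row A '' {j : Fin k | j ≠ i})) :
    c (Fin.castAdd t i) = 0 := by
  have : Submodule.span (ZMod 2) (row A '' {j : Fin k | j ≠ i}) ≤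
      LinearMap.ker (LinearMap.proj (R := ZMod 2) (φ := fun _ : Fin (k+t) => ZMod 2)
        (Fin.castAdd t i)) := by
    rw [Submodule.span_le]
    rintro _ ⟨j, hj, rfl⟩
    simp only [SetLike.mem_coe, LinearMap.mem_ker, LinearMap.proj_apply]
    rw [row_apply_castAdd, if_neg (Ne.symm hj)]
  exact this hc

lemma mem_C'_of (c : Fin (k+t) → ZMod 2) (hc : c ∈ genCode A)
    (h0 : c (Fin.castAdd t i) = 0) :
    c ∈ Submodule.span (ZMod 2) (row A '' {j : Fin k | j ≠ i}) := by
  rw [genCode, Submodule.mem_span_range_iff_exists_fun] at hc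
  obtain ⟨f, hf⟩ := hc
  have hfi : f i = 0 := by
    have := congrFun hf (Fin.castAdd t i)
    simp only [Finset.sum_apply, Pi.smul_apply, smul_eq_mul] at this
    rw [h0] at this
    rw [← this]
    rw [Finset.sum_congr rfl (fun j _ => by rw [row_apply_castAdd])]
    simp
  have : c = ∑ j ∈ Finset.univ.erase i, f j • row A j := by
    rw [← hf, ← Finset.add_sum_erase _ _ (Finset.mem_univ i), hfi, zero_smul, zero_add]
  rw [this]
  exact Submodule.sum_mem _ fun j hj =>
    Submodule.smul_mem _ _ (Submodule.subset_span ⟨j, Finset.ne_of_mem_erase hj, rfl⟩)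

lemma C'_le : Submodule.span (ZMod 2) (row A '' {j : Fin k | j ≠ i}) ≤ genCode A :=
  Submodule.span_mono (Set.image_subset_range _ _)

lemma rowi_eq (hAi : A i = 0) : row A i = Pi.single (Fin.castAdd t i) 1 := by
  funext p
  refine Fin.addCases (fun m => ?_) (fun m => ?_) p
  · rw [row_apply_castAdd, Pi.single_apply]
    by_cases h : m = i
    · subst h; simp
    · rw [if_neg h, if_neg (by simpa using h)]
  · rw [Pi.single_apply, if_neg (by simp [Fin.ext_iff]; omega)]
    simp [row, Fin.append_right, hAi]

lemma supp_rowi (hAi : A i = 0) : supp (row A i) = {Fin.castAdd t i} := by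
  rw [rowi_eq A i hAi]
  ext p
  simp [supp, Pi.single_apply]

lemma eq_zero_of_supp_empty {n : ℕ} {c : Fin n → ZMod 2} (h : supp c = ∅) : c = 0 := by
  funext p
  by_contra hp
  exact (Set.eq_empty_iff_forall_notMem.1 h p) hp

end Aux

theorem stmt5 (k t : ℕ) (A : Fin k → Fin t → ZMod 2) (i : Fin k) (hAi : A i = 0) :
    Mcode (genCode A) =
      Mcode (Submodule.span (ZMod 2) (row A '' {j : Fin k | j ≠ i})) + 1 := by
  set C' := Submodule.span (ZMod 2) (row A '' {j : Fin k | j ≠ i}) with hC'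
  set ii := Fin.castAdd t i with hii
  have hrowC : row A i ∈ genCode A := Submodule.subset_span ⟨i, rfl⟩
  have hrow_ii : row A i ii = 1 := by
    rw [rowi_eq A i hAi, Pi.single_apply, if_pos rfl]
  have hrow_ne : row A i ≠ 0 := by
    intro h
    have := congrFun h ii
    rw [hrow_ii] at this
    exact one_ne_zero this
  have hsupp : supp (row A i) = {ii} := supp_rowi A i hAi
  -- row A i is minimal in genCode A
  have hmin_row : IsMinimal (genCode A) (row A i) := by
    refine ⟨hrowC, hrow_ne, fun c' _ hc'0 hss => ?_⟩
    rw [hsupp, Set.ssubset_singleton_iff] at hss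
    exact hc'0 (eq_zero_of_supp_empty hss)
  have hset : {c | IsMinimal (genCode A) c} = insert (row A i) {c | IsMinimal C' c} := by
    ext c
    simp only [Set.mem_setOf_eq, Set.mem_insert_iff]
    constructor
    · rintro ⟨hcC, hc0, hmin⟩
      by_cases hceq : c = row A i
      · exact Or.inl hceq
      right
      -- first show c ii = 0
      have hcii : c ii = 0 := by
        by_contra h
        have hmem : ii ∈ supp c := h
        by_cases hs : supp c = {ii}
        · apply hceq
          funext p
          by_cases hp : p = ii
          · subst hp
            rw [hrow_ii, zmod2_eq_one h]
          · have : p ∉ supp c := by rw [hs]; simpa using hp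
            have hcp : c p = 0 := by simpa [supp] using this
            have hrp : row A i p = 0 := by
              rw [rowi_eq A i hAi, Pi.single_apply, if_neg hp]
            rw [hcp, hrp]
        · exact hmin (row A i) hrowC hrow_ne
            (by rw [hsupp]; exact ⟨Set.singleton_subset_iff.2 hmem, fun h' =>
              hs (subset_antisymm h' (Set.singleton_subset_iff.2 hmem))⟩)
      have hcC' : c ∈ C' := mem_C'_of A i c hcC hcii
      exact ⟨hcC', hc0, fun c' hc' hc'0 hss =>
        hmin c' (C'_le A i hc') hc'0 hss⟩
    · rintro (rfl | ⟨hcC', hc0, hmin⟩)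
      · exact hmin_row
      refine ⟨C'_le A i hcC', hc0, fun c' hc' hc'0 hss => ?_⟩
      have hcii : c ii = 0 := coordC' A i c hcC'
      have hc'ii : c' ii = 0 := by
        by_contra h
        have : ii ∈ supp c := hss.1 h
        exact this hcii
      exact hmin c' (mem_C'_of A i c' hc' hc'ii) hc'0 hss
  have hnotmem : row A i ∉ {c | IsMinimal C' c} := by
    intro h
    have := coordC' A i (row A i) h.1
    rw [hrow_ii] at this
    exact one_ne_zero this
  rw [Mcode, hset, Set.ncard_insert_of_notMem hnotmem (Set.toFinite _), Mcode]
end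

section
/- Let C and C' be binary linear [k+t, k] codes, each given by a systematic generator matrix. If the counting vectors satisfy a_τ(C) = a_τ(C') for every τ ∈ F_2^t, then M(C) = M(C'). -/
open Finset

section Aux

variable {n : ℕ}

lemma supp_comp (π : Equiv.Perm (Fin n)) (x : Fin n → ZMod 2) :
    supp (x ∘ π) = π ⁻¹' supp x := rfl

lemma supp_ssubset_comp (π : Equiv.Perm (Fin n)) (x y : Fin n → ZMod 2) :
    supp (x ∘ π) ⊂ supp (y ∘ π) ↔ supp x ⊂ supp y := by
  rw [supp_comp, supp_comp, Set.ssubset_def, Set.ssubset_def,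
    Equiv.preimage_subset, Equiv.preimage_subset]

lemma comp_eq_zero_iff (π : Equiv.Perm (Fin n)) (x : Fin n → ZMod 2) :
    x ∘ π = 0 ↔ x = 0 := by
  constructor
  · intro hx
    funext j
    have := congrFun hx (π.symm j)
    simpa using this
  · intro hx; subst hx; rfl

/-- Permuting coordinates preserves the number of minimal codewords. -/
lemma Mcode_map_perm (π : Equiv.Perm (Fin n)) (C : Submodule (ZMod 2) (Fin n → ZMod 2)) :
    Mcode (C.map (LinearMap.funLeft (ZMod 2) (ZMod 2) π)) = Mcode C := by
  set T : (Fin n → ZMod 2) →ₗ[ZMod 2] (Fin n → ZMod 2) := LinearMap.funLeft (ZMod 2) (ZMod 2) π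
  have hT : ∀ x, T x = x ∘ π := fun x => rfl
  have hTinj : Function.Injective T := by
    intro x y hxy
    funext j
    have := congrFun hxy (π.symm j)
    simpa [hT, Function.comp] using this
  have hmem : ∀ x, x ∈ C ↔ T x ∈ C.map T := by
    intro x
    constructor
    · intro hx; exact Submodule.mem_map_of_mem hx
    · rintro hx
      rcases Submodule.mem_map.mp hx with ⟨y, hy, hyx⟩
      rwa [hTinj hyx] at hy
  have hmin : ∀ x, IsMinimal C x ↔ IsMinimal (C.map T) (T x) := by
    intro x
    constructor
    · rintro ⟨hx, hx0, hmin⟩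
      refine ⟨Submodule.mem_map_of_mem hx, ?_, ?_⟩
      · intro h0
        exact hx0 ((comp_eq_zero_iff π x).mp h0)
      · intro c' hc' hc'0 hss
        rcases Submodule.mem_map.mp hc' with ⟨y, hy, rfl⟩
        have hy0 : y ≠ 0 := fun h => hc'0 (by simp [h, hT])
        exact hmin y hy hy0 ((supp_ssubset_comp π y x).mp (by simpa [hT] using hss))
    · rintro ⟨hx, hx0, hmin⟩
      refine ⟨(hmem x).mpr hx, ?_, ?_⟩
      · intro h0
        exact hx0 (by simp [h0, hT])
      · intro c' hc' hc'0 hss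
        have hc'm : T c' ∈ C.map T := Submodule.mem_map_of_mem hc'
        have hc'0' : T c' ≠ 0 := fun h => hc'0 ((comp_eq_zero_iff π c').mp h)
        exact hmin (T c') hc'm hc'0' ((supp_ssubset_comp π c' x).mpr hss)
  have hset : {c | IsMinimal (C.map T) c} = T '' {c | IsMinimal C c} := by
    ext c
    constructor
    · intro hc
      rcases Submodule.mem_map.mp hc.1 with ⟨y, hy, rfl⟩
      exact ⟨y, (hmin y).mpr hc, rfl⟩
    · rintro ⟨y, hy, rfl⟩
      exact (hmin y).mp hy
  unfold Mcode
  rw [hset, Set.ncard_image_of_injective _ hTinj]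

end Aux

theorem stmt6 (k t : ℕ) (A A' : Fin k → Fin t → ZMod 2)
    (h : ∀ τ : Fin t → ZMod 2, aCount A τ = aCount A' τ) :
    Mcode (genCode A) = Mcode (genCode A') := by
  classical
  -- build a bijection e with A (e i) = A' i
  have hcard : ∀ τ : Fin t → ZMod 2,
      Fintype.card {i // A' i = τ} = Fintype.card {i // A i = τ} := by
    intro τ
    rw [Fintype.card_subtype, Fintype.card_subtype]
    exact (h τ).symm
  let fib : ∀ τ : Fin t → ZMod 2, {i // A' i = τ} ≃ {i // A i = τ} :=
    fun τ => Fintype.equivOfCardEq (hcard τ)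
  let e : Fin k ≃ Fin k :=
    (Equiv.sigmaFiberEquiv A').symm.trans
      ((Equiv.sigmaCongrRight fib).trans (Equiv.sigmaFiberEquiv A))
  have he : ∀ i, A (e i) = A' i := by
    intro i
    exact (fib (A' i) ⟨i, rfl⟩).2
  -- the coordinate permutation
  let π : Equiv.Perm (Fin (k + t)) :=
    finSumFinEquiv.symm.trans ((Equiv.sumCongr e (Equiv.refl (Fin t))).trans finSumFinEquiv)
  have hπl : ∀ j : Fin k, π (Fin.castAdd t j) = Fin.castAdd t (e j) := by
    intro j
    simp [π, finSumFinEquiv_symm_apply_castAdd]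
  have hπr : ∀ j : Fin t, π (Fin.natAdd k j) = Fin.natAdd k j := by
    intro j
    simp [π, finSumFinEquiv_symm_apply_natAdd]
  have hrow : ∀ i, row A (e i) ∘ π = row A' i := by
    intro i
    funext j
    refine Fin.addCases ?_ ?_ j
    · intro l
      simp only [Function.comp_apply, hπl]
      rw [row, row, Fin.append_left, Fin.append_left]
      simp [Pi.single_apply, e.injective.eq_iff]
    · intro l
      simp only [Function.comp_apply, hπr]
      rw [row, row, Fin.append_right, Fin.append_right, he]
  -- genCode A' is the image of genCode A under the permutation map
  have hmap : (genCode A).map (LinearMap.funLeft (ZMod 2) (ZMod 2) π) = genCode A' := by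
    unfold genCode
    rw [Submodule.map_span]
    congr 1
    ext c
    constructor
    · rintro ⟨x, ⟨i, rfl⟩, rfl⟩
      refine ⟨e.symm i, ?_⟩
      have := hrow (e.symm i)
      rw [e.apply_symm_apply] at this
      rw [← this]
      rfl
    · rintro ⟨i, rfl⟩
      exact ⟨row A (e i), ⟨e i, rfl⟩, hrow i⟩
  rw [← hmap, Mcode_map_perm]
end

section
/- Let s, r, m be positive integers with s ≤ r, and define f(x_1, ..., x_r) = Σ_{S ⊆ {1,...,r}, #S = s} Π_{i∈S} x_i. Then among all (x_1,...,x_r) with x_i nonnegative integers and Σ_{i=1}^r x_i = m, the maximum of f is attained at x_i = ⌊(m+i-1)/r⌋ for 1 ≤ i ≤ r. -/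
open Finset

set_option maxHeartbeats 1000000


lemma part1 (r m : ℕ) (hr : 0 < r) : (∑ i : Fin r, (m + (i : ℕ)) / r) = m := by
  have key : ∀ i : Fin r, (m + (i : ℕ)) / r = m / r + (if r ≤ m % r + i then 1 else 0) := by
    intro i
    rw [Nat.add_div hr, Nat.div_eq_of_lt i.isLt, Nat.mod_eq_of_lt i.isLt, add_zero]
  rw [Finset.sum_congr rfl (fun i _ => key i), Finset.sum_add_distrib]
  rw [Finset.sum_const, Finset.card_univ, Fintype.card_fin, Fin.sum_univ_eq_sum_range
    (fun i => if r ≤ m % r + i then 1 else 0)]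
  have h2 : ∑ i ∈ Finset.range r, (if r ≤ m % r + i then 1 else 0) = m % r := by
    rw [Finset.sum_ite, Finset.sum_const, Finset.sum_const]
    have hlt : m % r < r := Nat.mod_lt _ hr
    have : Finset.filter (fun i => r ≤ m % r + i) (Finset.range r) = Finset.Ico (r - m % r) r := by
      ext i; simp [Finset.mem_Ico]; omega
    rw [this, Nat.card_Ico]
    simp; omega
  rw [h2, smul_eq_mul]
  have := Nat.div_add_mod m r
  omega


lemma Einsert {α : Type*} [DecidableEq α] {a : α} {u : Finset α} (ha : a ∉ u) (n : ℕ)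
    (x : α → ℕ) :
    ∑ S ∈ (insert a u).powersetCard (n + 1), ∏ i ∈ S, x i
      = (∑ S ∈ u.powersetCard (n + 1), ∏ i ∈ S, x i)
        + x a * ∑ S ∈ u.powersetCard n, ∏ i ∈ S, x i := by
  rw [Finset.powersetCard_succ_insert ha, Finset.sum_union, Finset.sum_image]
  · congr 1
    rw [Finset.mul_sum]
    refine Finset.sum_congr rfl fun S hS => ?_
    have haS : a ∉ S := fun h => ha ((Finset.mem_powersetCard.1 hS).1 h)
    rw [Finset.prod_insert haS]
  · intro S hS T hT hST
    have haS : a ∉ S := fun h => ha ((Finset.mem_powersetCard.1 hS).1 h)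
    have haT : a ∉ T := fun h => ha ((Finset.mem_powersetCard.1 hT).1 h)
    have := congrArg (Finset.erase · a) hST
    simpa [Finset.erase_insert haS, Finset.erase_insert haT] using this
  · rw [Finset.disjoint_left]
    intro S hS hS'
    obtain ⟨T, hT, rfl⟩ := Finset.mem_image.1 hS'
    exact ha ((Finset.mem_powersetCard.1 hS).1 (Finset.mem_insert_self a T))

lemma Ezero {α : Type*} (u : Finset α) (x : α → ℕ) :
    ∑ S ∈ u.powersetCard 0, ∏ i ∈ S, x i = 1 := by
  simp [Finset.powersetCard_zero]

lemma F_pair {r : ℕ} (s : ℕ) (hs : 0 < s) (i j : Fin r) (hij : i ≠ j) (x y : Fin r → ℕ)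
    (hxy : ∀ k, k ≠ i → k ≠ j → x k = y k)
    (hsum : x i + x j = y i + y j) (hprod : x i * x j ≤ y i * y j) :
    (∑ S ∈ Finset.powersetCard s (Finset.univ : Finset (Fin r)), ∏ k ∈ S, x k)
      ≤ ∑ S ∈ Finset.powersetCard s (Finset.univ : Finset (Fin r)), ∏ k ∈ S, y k := by
  classical
  set u : Finset (Fin r) := (Finset.univ.erase i).erase j with hu
  have hju : j ∉ u := Finset.notMem_erase _ _
  have hiu : i ∉ insert j u := by
    simp only [Finset.mem_insert, hu]
    push_neg
    exact ⟨hij, fun h => (Finset.notMem_erase i Finset.univ) (Finset.mem_of_mem_erase h)⟩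
  have huniv : (Finset.univ : Finset (Fin r)) = insert i (insert j u) := by
    rw [hu, Finset.insert_erase (Finset.mem_erase.2 ⟨Ne.symm hij, Finset.mem_univ j⟩),
      Finset.insert_erase (Finset.mem_univ i)]
  have hcongr : ∀ nn : ℕ, ∑ S ∈ u.powersetCard nn, ∏ k ∈ S, x k
      = ∑ S ∈ u.powersetCard nn, ∏ k ∈ S, y k := by
    intro nn
    refine Finset.sum_congr rfl fun S hS => Finset.prod_congr rfl fun k hk => ?_
    have hkU : k ∈ u := (Finset.mem_powersetCard.1 hS).1 hk
    have hki : k ≠ i := by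
      intro h; subst h
      exact (Finset.notMem_erase k Finset.univ) (Finset.mem_of_mem_erase hkU)
    have hkj : k ≠ j := by
      intro h; subst h; exact hju hkU
    exact hxy k hki hkj
  obtain ⟨n, rfl⟩ : ∃ n, s = n + 1 := ⟨s - 1, by omega⟩
  have expand : ∀ z : Fin r → ℕ,
      ∑ S ∈ Finset.powersetCard (n + 1) (Finset.univ : Finset (Fin r)), ∏ k ∈ S, z k
        = (∑ S ∈ (insert j u).powersetCard (n + 1), ∏ k ∈ S, z k)
          + z i * ∑ S ∈ (insert j u).powersetCard n, ∏ k ∈ S, z k := by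
    intro z
    rw [huniv, Einsert hiu]
  cases n with
  | zero =>
    rw [expand x, expand y, Einsert hju, Einsert hju, Ezero, Ezero, Ezero, Ezero, hcongr (0+1)]
    omega
  | succ k =>
    have expand2 : ∀ z : Fin r → ℕ,
        ∑ S ∈ Finset.powersetCard (k + 1 + 1) (Finset.univ : Finset (Fin r)), ∏ l ∈ S, z l
          = (∑ S ∈ u.powersetCard (k + 2), ∏ l ∈ S, z l)
            + (z i + z j) * (∑ S ∈ u.powersetCard (k + 1), ∏ l ∈ S, z l)
            + (z i * z j) * ∑ S ∈ u.powersetCard k, ∏ l ∈ S, z l := by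
      intro z
      rw [expand z, Einsert hju, Einsert hju]
      ring
    rw [expand2 x, expand2 y, hcongr (k+2), hcongr (k+1), hcongr k, hsum]
    have := Nat.mul_le_mul_right (∑ S ∈ u.powersetCard k, ∏ l ∈ S, y l) hprod
    omega


lemma split_sum {r : ℕ} {i j : Fin r} (hij : i ≠ j) (f : Fin r → ℕ) :
    ∑ k, f k = f i + f j + ∑ k ∈ (Finset.univ.erase i).erase j, f k := by
  have hju : j ∉ (Finset.univ.erase i).erase j := Finset.notMem_erase _ _
  have hiu : i ∉ insert j ((Finset.univ.erase i).erase j) := by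
    simp only [Finset.mem_insert]
    push_neg
    exact ⟨hij, fun h => (Finset.notMem_erase i Finset.univ) (Finset.mem_of_mem_erase h)⟩
  have huniv : (Finset.univ : Finset (Fin r)) = insert i (insert j ((Finset.univ.erase i).erase j)) := by
    rw [Finset.insert_erase (Finset.mem_erase.2 ⟨Ne.symm hij, Finset.mem_univ j⟩),
      Finset.insert_erase (Finset.mem_univ i)]
  conv_lhs => rw [huniv]
  rw [Finset.sum_insert hiu, Finset.sum_insert hju]
  ring

lemma mem_w {r : ℕ} {i j k : Fin r} (hk : k ∈ (Finset.univ.erase i).erase j) :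
    k ≠ i ∧ k ≠ j := by
  simp only [Finset.mem_erase, Finset.mem_univ, and_true] at hk
  exact ⟨hk.2, hk.1⟩

lemma fixpoint {r m : ℕ} (hr : 0 < r) (x : Fin r → ℕ) (hsum : (∑ i, x i) = m)
    (hgap : ∀ i j : Fin r, x i ≤ x j + 1)
    (hmono : ∀ i j : Fin r, i ≤ j → x i ≤ x j) :
    ∀ i, x i = (m + (i : ℕ)) / r := by
  intro i
  set i0 : Fin r := ⟨0, hr⟩ with hi0
  set v := x i0 with hv
  have hle0 : ∀ k : Fin r, i0 ≤ k := fun k => by simp [Fin.le_def, hi0]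
  have hval : ∀ k, x k = v ∨ x k = v + 1 := fun k => by
    have h1 := hmono i0 k (hle0 k)
    have h2 := hgap k i0
    omega
  set c := (Finset.univ.filter (fun k : Fin r => x k = v + 1)).card with hc
  have hsum2 : m = r * v + c := by
    have : ∀ k, x k = v + (if x k = v + 1 then 1 else 0) := by
      intro k; rcases hval k with h | h <;> simp [h] <;> omega
    rw [← hsum, Finset.sum_congr rfl fun k _ => this k, Finset.sum_add_distrib,
      Finset.sum_const, Finset.card_univ, Fintype.card_fin, Finset.sum_ite,
      Finset.sum_const, Finset.sum_const]
    simp [hc, mul_comm]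
  have hclt : c < r := by
    by_contra h
    push_neg at h
    have hcle : (Finset.univ.filter (fun k : Fin r => x k = v + 1)).card ≤ r := by
      have := Finset.card_filter_le Finset.univ (fun k : Fin r => x k = v + 1)
      simpa using this
    rw [← hc] at hcle
    have heq : (Finset.univ.filter (fun k : Fin r => x k = v + 1)) = Finset.univ := by
      apply Finset.eq_univ_of_card
      rw [← hc, Fintype.card_fin]
      omega
    have : x i0 = v + 1 := by
      have h2 := heq ▸ Finset.mem_univ i0
      exact (Finset.mem_filter.1 h2).2
    omega
  have hdv : m / r = v := by rw [hsum2, Nat.mul_add_div hr]; simp [Nat.div_eq_of_lt hclt]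
  have hdm : m % r = c := by rw [hsum2, Nat.mul_add_mod]; exact Nat.mod_eq_of_lt hclt
  have hthresh : ∀ k : Fin r, x k = v + 1 ↔ r ≤ c + k := by
    intro k
    constructor
    · intro hk
      have hsub : Finset.Ici k ⊆ Finset.univ.filter (fun l : Fin r => x l = v + 1) := by
        intro l hl
        simp only [Finset.mem_filter, Finset.mem_univ, true_and]
        have h1 := hmono k l (Finset.mem_Ici.1 hl)
        rcases hval l with h | h <;> omega
      have := Finset.card_le_card hsub
      rw [Fin.card_Ici] at this
      have := k.isLt
      omega
    · intro hk
      by_contra hne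
      have hxk : x k = v := by rcases hval k with h | h; exact h; exact absurd h hne
      have hsub : Finset.univ.filter (fun l : Fin r => x l = v + 1) ⊆ (Finset.Iic k)ᶜ := by
        intro l hl
        simp only [Finset.mem_compl, Finset.mem_Iic]
        intro hle
        have h1 := hmono l k hle
        have h2 := (Finset.mem_filter.1 hl).2
        omega
      have hcard := Finset.card_le_card hsub
      rw [Finset.card_compl, Fin.card_Iic, Fintype.card_fin] at hcard
      have := k.isLt
      omega
  have key : (m + (i : ℕ)) / r = m / r + (if r ≤ m % r + i then 1 else 0) := by
    rw [Nat.add_div hr, Nat.div_eq_of_lt i.isLt, Nat.mod_eq_of_lt i.isLt, add_zero]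
  rw [key, hdv, hdm]
  by_cases h : r ≤ c + (i : ℕ)
  · rw [if_pos h]; exact (hthresh i).2 h
  · rw [if_neg h]
    rcases hval i with hh | hh
    · simpa using hh
    · exact absurd ((hthresh i).1 hh) h

theorem stmt14 (s r m : ℕ) (hs : 0 < s) (hr : 0 < r) (hm : 0 < m) (hsr : s ≤ r) :
    (∑ i : Fin r, (m + (i : ℕ)) / r) = m ∧
    ∀ x : Fin r → ℕ, (∑ i, x i) = m →
      (∑ S ∈ Finset.powersetCard s (Finset.univ : Finset (Fin r)), ∏ i ∈ S, x i)
        ≤ ∑ S ∈ Finset.powersetCard s (Finset.univ : Finset (Fin r)),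
            ∏ i ∈ S, (m + (i : ℕ)) / r := by
  refine ⟨part1 r m hr, ?_⟩
  set F : (Fin r → ℕ) → ℕ :=
    fun z => ∑ S ∈ Finset.powersetCard s (Finset.univ : Finset (Fin r)), ∏ i ∈ S, z i with hF
  set b : Fin r → ℕ := fun i => (m + (i : ℕ)) / r with hb
  show ∀ x : Fin r → ℕ, (∑ i, x i) = m → F x ≤ F b
  set Φ : (Fin r → ℕ) → ℕ := fun z => ∑ k, z k ^ 2 with hΦ
  set T : (Fin r → ℕ) → ℕ := fun z => ∑ k : Fin r, (k : ℕ) * z k with hT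
  set P : (Fin r → ℕ) → ℕ := fun z => Φ z * (r * m + 1) + (r * m - T z) with hP
  have Tbound : ∀ z : Fin r → ℕ, (∑ i, z i) = m → T z ≤ r * m := by
    intro z hz
    calc T z ≤ ∑ k : Fin r, r * z k := by
          apply Finset.sum_le_sum
          intro k _
          exact Nat.mul_le_mul_right _ (le_of_lt k.isLt)
      _ = r * m := by rw [← Finset.mul_sum, hz]
  -- the one-step improvement
  have step : ∀ y : Fin r → ℕ, (∑ i, y i) = m →
      y = b ∨ ∃ y', (∑ i, y' i) = m ∧ F y ≤ F y' ∧ P y' < P y := by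
    intro y hy
    by_cases h1 : ∃ p : Fin r × Fin r, y p.2 + 2 ≤ y p.1
    · obtain ⟨⟨i, j⟩, hij2⟩ := h1
      simp only at hij2
      have hij : i ≠ j := by rintro rfl; omega
      set y' := Function.update (Function.update y i (y i - 1)) j (y j + 1) with hy'
      have hvi : y' i = y i - 1 := by
        rw [hy', Function.update_of_ne hij, Function.update_self]
      have hvj : y' j = y j + 1 := by rw [hy', Function.update_self]
      have hvk : ∀ k, k ≠ i → k ≠ j → y' k = y k := by
        intro k hki hkj
        rw [hy', Function.update_of_ne hkj, Function.update_of_ne hki]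
      have hw : (∑ k ∈ (Finset.univ.erase i).erase j, y' k)
          = ∑ k ∈ (Finset.univ.erase i).erase j, y k :=
        Finset.sum_congr rfl fun k hk => hvk k (mem_w hk).1 (mem_w hk).2
      have hyd := split_sum hij y
      have hsum' : (∑ k, y' k) = m := by
        rw [split_sum hij y', hvi, hvj, hw]
        omega
      refine Or.inr ⟨y', hsum', ?_, ?_⟩
      · apply F_pair s hs i j hij y y' (fun k hki hkj => (hvk k hki hkj).symm)
        · omega
        · rw [hvi, hvj]
          obtain ⟨c, hc⟩ : ∃ c, y i = c + 1 := ⟨y i - 1, by omega⟩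
          rw [hc]
          simp only [Nat.add_sub_cancel]
          nlinarith
      · have hw2 : (∑ k ∈ (Finset.univ.erase i).erase j, y' k ^ 2)
            = ∑ k ∈ (Finset.univ.erase i).erase j, y k ^ 2 :=
          Finset.sum_congr rfl fun k hk => by rw [hvk k (mem_w hk).1 (mem_w hk).2]
        have hΦd : Φ y' + 2 ≤ Φ y := by
          have e1 : Φ y' = y' i ^ 2 + y' j ^ 2 + ∑ k ∈ (Finset.univ.erase i).erase j, y' k ^ 2 :=
            split_sum hij (fun k => y' k ^ 2)
          have e2 : Φ y = y i ^ 2 + y j ^ 2 + ∑ k ∈ (Finset.univ.erase i).erase j, y k ^ 2 :=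
            split_sum hij (fun k => y k ^ 2)
          rw [e1, e2, hvi, hvj, hw2]
          obtain ⟨c, hc⟩ : ∃ c, y i = c + 1 := ⟨y i - 1, by omega⟩
          rw [hc]
          simp only [Nat.add_sub_cancel]
          nlinarith
        have hT' : T y' ≤ r * m := Tbound y' hsum'
        have e1 : Φ y' * (r * m + 1) + 2 * (r * m + 1) ≤ Φ y * (r * m + 1) := by
          rw [← add_mul]
          exact Nat.mul_le_mul_right _ hΦd
        have g1 : P y' = Φ y' * (r * m + 1) + (r * m - T y') := rfl
        have g2 : P y = Φ y * (r * m + 1) + (r * m - T y) := rfl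
        rw [g1, g2]
        omega
    · by_cases h2 : ∃ p : Fin r × Fin r, p.1 < p.2 ∧ y p.2 < y p.1
      · obtain ⟨⟨i, j⟩, hlt, hylt⟩ := h2
        simp only at hlt hylt
        have hij : i ≠ j := ne_of_lt hlt
        set y' := Function.update (Function.update y i (y j)) j (y i) with hy'
        have hvi : y' i = y j := by
          rw [hy', Function.update_of_ne hij, Function.update_self]
        have hvj : y' j = y i := by rw [hy', Function.update_self]
        have hvk : ∀ k, k ≠ i → k ≠ j → y' k = y k := by
          intro k hki hkj
          rw [hy', Function.update_of_ne hkj, Function.update_of_ne hki]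
        have hw : (∑ k ∈ (Finset.univ.erase i).erase j, y' k)
            = ∑ k ∈ (Finset.univ.erase i).erase j, y k :=
          Finset.sum_congr rfl fun k hk => hvk k (mem_w hk).1 (mem_w hk).2
        have hyd := split_sum hij y
        have hsum' : (∑ k, y' k) = m := by
          rw [split_sum hij y', hvi, hvj, hw]
          omega
        refine Or.inr ⟨y', hsum', ?_, ?_⟩
        · apply F_pair s hs i j hij y y' (fun k hki hkj => (hvk k hki hkj).symm)
          · omega
          · rw [hvi, hvj, mul_comm]
        · have hw2 : (∑ k ∈ (Finset.univ.erase i).erase j, y' k ^ 2)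
              = ∑ k ∈ (Finset.univ.erase i).erase j, y k ^ 2 :=
            Finset.sum_congr rfl fun k hk => by rw [hvk k (mem_w hk).1 (mem_w hk).2]
          have hΦe : Φ y' = Φ y := by
            have e1 : Φ y' = y' i ^ 2 + y' j ^ 2 + ∑ k ∈ (Finset.univ.erase i).erase j, y' k ^ 2 :=
              split_sum hij (fun k => y' k ^ 2)
            have e2 : Φ y = y i ^ 2 + y j ^ 2 + ∑ k ∈ (Finset.univ.erase i).erase j, y k ^ 2 :=
              split_sum hij (fun k => y k ^ 2)
            rw [e1, e2, hvi, hvj, hw2]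
            ring
          have hw3 : (∑ k ∈ (Finset.univ.erase i).erase j, (k : ℕ) * y' k)
              = ∑ k ∈ (Finset.univ.erase i).erase j, (k : ℕ) * y k :=
            Finset.sum_congr rfl fun k hk => by rw [hvk k (mem_w hk).1 (mem_w hk).2]
          have hTlt : T y + 1 ≤ T y' := by
            have e1 : T y' = (i : ℕ) * y' i + (j : ℕ) * y' j
                + ∑ k ∈ (Finset.univ.erase i).erase j, (k : ℕ) * y' k :=
              split_sum hij (fun k => (k : ℕ) * y' k)
            have e2 : T y = (i : ℕ) * y i + (j : ℕ) * y j
                + ∑ k ∈ (Finset.univ.erase i).erase j, (k : ℕ) * y k :=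
              split_sum hij (fun k => (k : ℕ) * y k)
            rw [e1, e2, hvi, hvj, hw3]
            have hab : (i : ℕ) < (j : ℕ) := hlt
            obtain ⟨p, hp⟩ : ∃ p, (j : ℕ) = (i : ℕ) + p + 1 := ⟨(j : ℕ) - (i : ℕ) - 1, by omega⟩
            obtain ⟨q, hq⟩ : ∃ q, y i = y j + q + 1 := ⟨y i - y j - 1, by omega⟩
            rw [hp, hq]
            nlinarith [Nat.zero_le (p * q)]
          have hT' : T y' ≤ r * m := Tbound y' hsum'
          have g1 : P y' = Φ y' * (r * m + 1) + (r * m - T y') := rfl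
          have g2 : P y = Φ y * (r * m + 1) + (r * m - T y) := rfl
          rw [g1, g2, hΦe]
          omega
      · -- fixpoint
        left
        funext i
        rw [hb]
        apply fixpoint hr y hy
        · intro a c
          by_contra hcon
          push_neg at hcon
          exact h1 ⟨(a, c), show y c + 2 ≤ y a by omega⟩
        · intro a c hac
          rcases eq_or_lt_of_le hac with h | h
          · rw [h]
          · by_contra hcon
            push_neg at hcon
            exact h2 ⟨(a, c), h, show y c < y a from hcon⟩
  -- main induction
  intro x hx
  have main : ∀ N : ℕ, ∀ y : Fin r → ℕ, (∑ i, y i) = m → P y ≤ N → F y ≤ F b := by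
    intro N
    induction N with
    | zero =>
      intro y hy hPy
      rcases step y hy with rfl | ⟨y', _, _, h3⟩
      · exact le_rfl
      · omega
    | succ n ih =>
      intro y hy hPy
      rcases step y hy with rfl | ⟨y', h1, h2, h3⟩
      · exact le_rfl
      · exact h2.trans (ih y' h1 (by omega))
  exact main (P x) x hx le_rfl
end

section
/- Let C be a binary linear [k+2, k] code with systematic generator matrix G = [I_k | A] (so t = 2), with counting vector (a_00, a_10, a_01, a_11) where a_τ = #{i : g^i_I = τ} for τ ∈ F_2^2. Then M(C) = k + (k − a_00)(k − a_00 − 1)/2 − a_10·a_01 + a_10·a_01·a_11. -/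
open Finset

namespace Stmt17

variable {k : ℕ} (A : Fin k → Fin 2 → ZMod 2)

/-- sum of the rows of A over S -/
def sig (S : Finset (Fin k)) : Fin 2 → ZMod 2 := ∑ i ∈ S, A i

lemma zmod2_cases : ∀ a : ZMod 2, a = 0 ∨ a = 1 := by decide

lemma cS_castAdd (S : Finset (Fin k)) (i : Fin k) :
    cS A S (Fin.castAdd 2 i) = if i ∈ S then 1 else 0 := by
  unfold cS
  rw [Finset.sum_apply]
  have : ∀ j : Fin k, row A j (Fin.castAdd 2 i) = (Pi.single j (1 : ZMod 2) : Fin k → ZMod 2) i := by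
    intro j; simp [row, Fin.append_left]
  simp only [this, Pi.single_apply]
  exact Finset.sum_ite_eq S i (fun _ => (1 : ZMod 2))

lemma cS_natAdd (S : Finset (Fin k)) (j : Fin 2) :
    cS A S (Fin.natAdd k j) = sig A S j := by
  unfold cS sig
  rw [Finset.sum_apply, Finset.sum_apply]
  refine Finset.sum_congr rfl fun i _ => ?_
  simp [row, Fin.append_right]

lemma mem_genCode_iff {c : Fin (k + 2) → ZMod 2} :
    c ∈ genCode A ↔ ∃ S : Finset (Fin k), c = cS A S := by
  constructor
  · intro hc
    obtain ⟨w, hw⟩ := (Submodule.mem_span_range_iff_exists_fun (ZMod 2)).mp hc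
    classical
    refine ⟨univ.filter (fun i => w i = 1), ?_⟩
    rw [← hw]
    unfold cS
    rw [Finset.sum_filter]
    refine Finset.sum_congr rfl fun i _ => ?_
    rcases zmod2_cases (w i) with h | h <;> simp [h]
  · rintro ⟨S, rfl⟩
    exact Submodule.sum_mem _ fun i _ => Submodule.subset_span ⟨i, rfl⟩

lemma cS_injective : Function.Injective (cS A) := by
  intro S S' h
  ext i
  have := congrFun h (Fin.castAdd 2 i)
  rw [cS_castAdd, cS_castAdd] at this
  by_cases hS : i ∈ S <;> by_cases hS' : i ∈ S' <;> simp_all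

lemma cS_eq_zero_iff {S : Finset (Fin k)} : cS A S = 0 ↔ S = ∅ := by
  constructor
  · intro h
    apply cS_injective A
    rw [h]; unfold cS; rw [Finset.sum_empty]
  · rintro rfl; unfold cS; rw [Finset.sum_empty]


lemma supp_subset_iff (S S' : Finset (Fin k)) :
    supp (cS A S') ⊆ supp (cS A S) ↔
      S' ⊆ S ∧ ∀ j, sig A S' j ≠ 0 → sig A S j ≠ 0 := by
  constructor
  · intro h
    constructor
    · intro i hi
      have h1 : Fin.castAdd 2 i ∈ supp (cS A S') := by
        simp only [supp, Set.mem_setOf_eq, cS_castAdd, hi, if_pos]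
        exact one_ne_zero
      have h2 := h h1
      simp only [supp, Set.mem_setOf_eq, cS_castAdd] at h2
      by_contra hc
      simp [hc] at h2
    · intro j hj
      have h1 : Fin.natAdd k j ∈ supp (cS A S') := by
        simpa only [supp, Set.mem_setOf_eq, cS_natAdd] using hj
      have h2 := h h1
      simpa only [supp, Set.mem_setOf_eq, cS_natAdd] using h2
  · rintro ⟨hSS, hsig⟩ x hx
    induction x using Fin.addCases with
    | left i =>
      simp only [supp, Set.mem_setOf_eq, cS_castAdd] at hx ⊢
      by_cases hi : i ∈ S'
      · simp [hSS hi]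
      · simp [hi] at hx
    | right j =>
      simp only [supp, Set.mem_setOf_eq, cS_natAdd] at hx ⊢
      exact hsig j hx

lemma supp_ssubset_iff (S S' : Finset (Fin k)) :
    supp (cS A S') ⊂ supp (cS A S) ↔
      S' ⊂ S ∧ ∀ j, sig A S' j ≠ 0 → sig A S j ≠ 0 := by
  rw [Set.ssubset_iff_subset_ne, supp_subset_iff]
  constructor
  · rintro ⟨⟨h1, h2⟩, hne⟩
    refine ⟨lt_of_le_of_ne h1 ?_, h2⟩
    rintro rfl
    exact hne rfl
  · rintro ⟨h1, h2⟩
    refine ⟨⟨h1.subset, h2⟩, ?_⟩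
    intro he
    obtain ⟨i, hiS, hiS'⟩ := Finset.exists_of_ssubset h1
    have : Fin.castAdd 2 i ∈ supp (cS A S) := by
      simp only [supp, Set.mem_setOf_eq, cS_castAdd, hiS, if_pos]
      exact one_ne_zero
    rw [← he] at this
    simp only [supp, Set.mem_setOf_eq, cS_castAdd, hiS', if_neg (by exact hiS')] at this
    exact this rfl

/-- minimality in terms of subsets -/
def Mn (S : Finset (Fin k)) : Prop :=
  S.Nonempty ∧ ∀ S' : Finset (Fin k), S' ⊂ S → S'.Nonempty →
    ¬ ∀ j, sig A S' j ≠ 0 → sig A S j ≠ 0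

lemma isMinimal_iff (S : Finset (Fin k)) :
    IsMinimal (genCode A) (cS A S) ↔ Mn A S := by
  constructor
  · rintro ⟨_, hne, hmin⟩
    refine ⟨Finset.nonempty_iff_ne_empty.mpr (fun h => hne ((cS_eq_zero_iff A).mpr h)), ?_⟩
    intro S' hS' hS'ne hcov
    refine hmin (cS A S') ((mem_genCode_iff A).mpr ⟨S', rfl⟩)
      (fun h => hS'ne.ne_empty ((cS_eq_zero_iff A).mp h)) ?_
    exact (supp_ssubset_iff A S S').mpr ⟨hS', hcov⟩
  · rintro ⟨hne, hmin⟩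
    refine ⟨(mem_genCode_iff A).mpr ⟨S, rfl⟩,
      fun h => hne.ne_empty ((cS_eq_zero_iff A).mp h), ?_⟩
    intro c' hc' hc'0 hss
    obtain ⟨S', rfl⟩ := (mem_genCode_iff A).mp hc'
    obtain ⟨h1, h2⟩ := (supp_ssubset_iff A S S').mp hss
    exact hmin S' h1
      (Finset.nonempty_iff_ne_empty.mpr (fun h => hc'0 ((cS_eq_zero_iff A).mpr h))) h2

open Classical in
lemma mcode_eq_card : Mcode (genCode A) = (univ.filter (Mn A)).card := by
  have hset : {c | IsMinimal (genCode A) c} = cS A '' {S | Mn A S} := by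
    ext c
    simp only [Set.mem_setOf_eq, Set.mem_image]
    constructor
    · intro hc
      obtain ⟨S, rfl⟩ := (mem_genCode_iff A).mp hc.1
      exact ⟨S, (isMinimal_iff A S).mp hc, rfl⟩
    · rintro ⟨S, hS, rfl⟩
      exact (isMinimal_iff A S).mpr hS
  rw [Mcode, hset, Set.ncard_image_of_injective _ (cS_injective A)]
  have : {S | Mn A S} = (↑(univ.filter (Mn A)) : Set (Finset (Fin k))) := by
    ext S; simp
  rw [this, Set.ncard_coe_finset]

lemma subset_insert_cases {α : Type*} [DecidableEq α] {a : α} {t s : Finset α}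
    (h : s ⊆ insert a t) : s ⊆ t ∨ ∃ s' ⊆ t, s = insert a s' := by
  by_cases ha : a ∈ s
  · right
    exact ⟨s.erase a, Finset.subset_insert_iff.mp h, (Finset.insert_erase ha).symm⟩
  · left
    intro x hx
    rcases Finset.mem_insert.mp (h hx) with rfl | hxt
    · exact absurd hx ha
    · exact hxt

lemma subset_pair_cases {a b : Fin k} {s : Finset (Fin k)} (h : s ⊆ {a, b}) :
    s = ∅ ∨ s = {a} ∨ s = {b} ∨ s = {a, b} := by
  rcases subset_insert_cases h with h1 | ⟨s', hs', rfl⟩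
  · rcases Finset.subset_singleton_iff.mp h1 with rfl | rfl
    · exact Or.inl rfl
    · exact Or.inr (Or.inr (Or.inl rfl))
  · rcases Finset.subset_singleton_iff.mp hs' with rfl | rfl
    · exact Or.inr (Or.inl rfl)
    · exact Or.inr (Or.inr (Or.inr rfl))

lemma subset_triple_cases {a b c : Fin k} {s : Finset (Fin k)} (h : s ⊆ {a, b, c}) :
    s = ∅ ∨ s = {a} ∨ s = {b} ∨ s = {c} ∨ s = {a, b} ∨ s = {a, c} ∨ s = {b, c} ∨ s = {a, b, c} := by
  rcases subset_insert_cases h with h1 | ⟨s', hs', rfl⟩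
  · rcases subset_pair_cases h1 with rfl | rfl | rfl | rfl
    · exact Or.inl rfl
    · tauto
    · tauto
    · tauto
  · rcases subset_pair_cases hs' with rfl | rfl | rfl | rfl
    · exact Or.inr (Or.inl rfl)
    · tauto
    · tauto
    · tauto

lemma sig_single (i : Fin k) : sig A {i} = A i := by
  unfold sig; rw [Finset.sum_singleton]

lemma sig_pair {i j : Fin k} (h : i ≠ j) : sig A {i, j} = A i + A j := by
  unfold sig; rw [Finset.sum_pair h]

lemma sig_triple {i j l : Fin k} (hij : i ≠ j) (hil : i ≠ l) (hjl : j ≠ l) :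
    sig A {i, j, l} = A i + A j + A l := by
  unfold sig
  rw [Finset.sum_insert (by simp [hij, hil]), Finset.sum_pair hjl, add_assoc]

lemma mn_singleton (i : Fin k) : Mn A {i} := by
  refine ⟨Finset.singleton_nonempty i, ?_⟩
  intro S' hS' hne _
  rw [Finset.ssubset_singleton_iff] at hS'
  exact hne.ne_empty hS'

lemma pair_ssubsets {i j : Fin k} (hij : i ≠ j) :
    ({i} : Finset (Fin k)) ⊂ {i, j} ∧ ({j} : Finset (Fin k)) ⊂ {i, j} := by
  constructor
  · rw [Finset.pair_comm]
    exact Finset.ssubset_insert (by simp [Ne.symm hij])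
  · exact Finset.ssubset_insert (by simp [hij])

lemma mn_pair {i j : Fin k} (hij : i ≠ j) :
    Mn A {i, j} ↔
      ¬ (∀ m, A i m ≠ 0 → (A i + A j) m ≠ 0) ∧ ¬ (∀ m, A j m ≠ 0 → (A i + A j) m ≠ 0) := by
  constructor
  · rintro ⟨_, hmin⟩
    obtain ⟨h1, h2⟩ := pair_ssubsets (k := k) hij
    constructor
    · have := hmin {i} h1 (Finset.singleton_nonempty i)
      rwa [sig_single, sig_pair A hij] at this
    · have := hmin {j} h2 (Finset.singleton_nonempty j)
      rwa [sig_single, sig_pair A hij] at this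
  · rintro ⟨h1, h2⟩
    refine ⟨Finset.insert_nonempty i {j}, ?_⟩
    intro S' hS' hne
    rcases subset_pair_cases hS'.subset with rfl | rfl | rfl | rfl
    · exact absurd rfl hne.ne_empty
    · rwa [sig_single, sig_pair A hij]
    · rwa [sig_single, sig_pair A hij]
    · exact absurd rfl hS'.ne

lemma zmod2vec_cases : ∀ u : Fin 2 → ZMod 2, u = ![0,0] ∨ u = ![1,0] ∨ u = ![0,1] ∨ u = ![1,1] := by
  decide

-- Characterization of minimal pairs at the value level
lemma pair_val_char : ∀ u v : Fin 2 → ZMod 2,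
    (¬ (∀ m, u m ≠ 0 → (u + v) m ≠ 0) ∧ ¬ (∀ m, v m ≠ 0 → (u + v) m ≠ 0)) ↔
    ((u = v ∧ u ≠ ![0,0]) ∨ (u = ![0,1] ∧ v = ![1,1]) ∨ (u = ![1,1] ∧ v = ![0,1])
      ∨ (u = ![1,0] ∧ v = ![1,1]) ∨ (u = ![1,1] ∧ v = ![1,0])) := by
  decide

lemma not_mn_of_zero {S : Finset (Fin k)} {i : Fin k} (hi : i ∈ S) (hA : A i = ![0,0])
    (hcard : 2 ≤ S.card) : ¬ Mn A S := by
  rintro ⟨_, hmin⟩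
  have hss : ({i} : Finset (Fin k)) ⊂ S := by
    refine Finset.ssubset_iff_subset_ne.mpr ⟨Finset.singleton_subset_iff.mpr hi, ?_⟩
    intro h
    rw [← h, Finset.card_singleton] at hcard
    omega
  refine hmin {i} hss (Finset.singleton_nonempty i) ?_
  intro m hm
  rw [sig_single, hA] at hm
  exact absurd (by fin_cases m <;> rfl) hm

lemma not_mn_of_eq {S : Finset (Fin k)} {i j : Fin k} (hij : i ≠ j) (hi : i ∈ S) (hj : j ∈ S)
    (hA : A i = A j) (hcard : 3 ≤ S.card) : ¬ Mn A S := by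
  rintro ⟨_, hmin⟩
  have hss : ({i, j} : Finset (Fin k)) ⊂ S := by
    refine Finset.ssubset_iff_subset_ne.mpr ⟨Finset.insert_subset hi (Finset.singleton_subset_iff.mpr hj), ?_⟩
    intro h
    rw [← h, Finset.card_pair hij] at hcard
    omega
  refine hmin {i, j} hss ⟨i, Finset.mem_insert_self i {j}⟩ ?_
  intro m hm
  rw [sig_pair A hij, hA] at hm
  exact absurd (CharTwo.add_self_eq_zero _) (by simpa using hm)

set_option maxHeartbeats 1000000 in
set_option synthInstance.maxHeartbeats 400000 in
set_option synthInstance.maxSize 512 in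
lemma triple_cov_char : ∀ u v w : Fin 2 → ZMod 2,
    (u ≠ v ∧ u ≠ w ∧ v ≠ w ∧ u ≠ ![0,0] ∧ v ≠ ![0,0] ∧ w ≠ ![0,0]) →
    (¬ (∀ m, u m ≠ 0 → (u + v + w) m ≠ 0) ∧ ¬ (∀ m, v m ≠ 0 → (u + v + w) m ≠ 0)
      ∧ ¬ (∀ m, w m ≠ 0 → (u + v + w) m ≠ 0)
      ∧ ¬ (∀ m, (u + v) m ≠ 0 → (u + v + w) m ≠ 0)
      ∧ ¬ (∀ m, (u + w) m ≠ 0 → (u + v + w) m ≠ 0)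
      ∧ ¬ (∀ m, (v + w) m ≠ 0 → (u + v + w) m ≠ 0)) := by
  decide

lemma card_triple {i j l : Fin k} (hij : i ≠ j) (hil : i ≠ l) (hjl : j ≠ l) :
    ({i, j, l} : Finset (Fin k)).card = 3 := by
  rw [Finset.card_insert_of_notMem (by simp [hij, hil]),
    Finset.card_insert_of_notMem (by simp [hjl]), Finset.card_singleton]

lemma mn_triple {i j l : Fin k} (hij : i ≠ j) (hil : i ≠ l) (hjl : j ≠ l) :
    Mn A {i, j, l} ↔
      (A i ≠ A j ∧ A i ≠ A l ∧ A j ≠ A l ∧ A i ≠ ![0,0] ∧ A j ≠ ![0,0] ∧ A l ≠ ![0,0]) := by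
  have hc3 : ({i, j, l} : Finset (Fin k)).card = 3 := card_triple hij hil hjl
  constructor
  · intro hmn
    have hiS : i ∈ ({i, j, l} : Finset (Fin k)) := by simp
    have hjS : j ∈ ({i, j, l} : Finset (Fin k)) := by simp
    have hlS : l ∈ ({i, j, l} : Finset (Fin k)) := by simp
    refine ⟨?_, ?_, ?_, ?_, ?_, ?_⟩
    · intro h; exact not_mn_of_eq A hij hiS hjS h (by omega) hmn
    · intro h; exact not_mn_of_eq A hil hiS hlS h (by omega) hmn
    · intro h; exact not_mn_of_eq A hjl hjS hlS h (by omega) hmn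
    · intro h; exact not_mn_of_zero A hiS h (by omega) hmn
    · intro h; exact not_mn_of_zero A hjS h (by omega) hmn
    · intro h; exact not_mn_of_zero A hlS h (by omega) hmn
  · intro hvals
    obtain ⟨c1, c2, c3, c4, c5, c6⟩ := triple_cov_char (A i) (A j) (A l) hvals
    refine ⟨⟨i, by simp⟩, ?_⟩
    intro S' hS' hne
    rw [sig_triple A hij hil hjl]
    rcases subset_triple_cases hS'.subset with rfl | rfl | rfl | rfl | rfl | rfl | rfl | rfl
    · exact absurd rfl hne.ne_empty
    · rwa [sig_single]
    · rwa [sig_single]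
    · rwa [sig_single]
    · rwa [sig_pair A hij]
    · rwa [sig_pair A hil]
    · rwa [sig_pair A hjl]
    · exact absurd rfl hS'.ne

lemma not_mn_of_card_ge_four {S : Finset (Fin k)} (hcard : 4 ≤ S.card) : ¬ Mn A S := by
  by_cases hz : ∃ i ∈ S, A i = ![0,0]
  · obtain ⟨i, hi, hAi⟩ := hz
    exact not_mn_of_zero A hi hAi (by omega)
  · push_neg at hz
    have hmaps : ∀ i ∈ S, A i ∈ ({![1,0], ![0,1], ![1,1]} : Finset (Fin 2 → ZMod 2)) := by
      intro i hi
      rcases zmod2vec_cases (A i) with h | h | h | h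
      · exact absurd h (hz i hi)
      all_goals simp [h]
    have hV : ({![1,0], ![0,1], ![1,1]} : Finset (Fin 2 → ZMod 2)).card = 3 := by decide
    obtain ⟨x, hx, y, hy, hxy, hfxy⟩ :=
      Finset.exists_ne_map_eq_of_card_lt_of_maps_to (by omega) hmaps
    exact not_mn_of_eq A hxy hx hy hfxy (by omega)

lemma mn_card_cases {S : Finset (Fin k)} (h : Mn A S) :
    S.card = 1 ∨ S.card = 2 ∨ S.card = 3 := by
  have h1 : 1 ≤ S.card := Finset.card_pos.mpr h.1
  have h4 : S.card < 4 := by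
    by_contra hc
    exact not_mn_of_card_ge_four A (by omega) h
  omega

/-- the fiber of value τ -/
def T (τ : Fin 2 → ZMod 2) : Finset (Fin k) := univ.filter (fun i => A i = τ)

lemma mem_T {τ : Fin 2 → ZMod 2} {i : Fin k} : i ∈ T A τ ↔ A i = τ := by
  simp [T]

lemma card_T (τ : Fin 2 → ZMod 2) : (T A τ).card = aCount A τ := rfl

/-- unordered pairs with one element in X, one in Y -/
def pairSet (X Y : Finset (Fin k)) : Finset (Finset (Fin k)) :=
  (X ×ˢ Y).image (fun p => ({p.1, p.2} : Finset (Fin k)))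

lemma mem_pairSet {X Y : Finset (Fin k)} {S : Finset (Fin k)} :
    S ∈ pairSet X Y ↔ ∃ i ∈ X, ∃ j ∈ Y, S = {i, j} := by
  simp only [pairSet, Finset.mem_image, Finset.mem_product, Prod.exists]
  constructor
  · rintro ⟨i, j, ⟨hi, hj⟩, rfl⟩; exact ⟨i, hi, j, hj, rfl⟩
  · rintro ⟨i, hi, j, hj, rfl⟩; exact ⟨i, j, ⟨hi, hj⟩, rfl⟩

lemma mem_pair_self_left {i j : Fin k} : i ∈ ({i, j} : Finset (Fin k)) := by simp
lemma mem_pair_self_right {i j : Fin k} : j ∈ ({i, j} : Finset (Fin k)) := by simp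

lemma card_pairSet {X Y : Finset (Fin k)} (hd : Disjoint X Y) :
    (pairSet X Y).card = X.card * Y.card := by
  rw [pairSet, Finset.card_image_of_injOn, Finset.card_product]
  rintro ⟨i, j⟩ hij ⟨i', j'⟩ hij' heq
  simp only [Finset.mem_coe, Finset.mem_product] at hij hij'
  obtain ⟨hi, hj⟩ := hij
  obtain ⟨hi', hj'⟩ := hij'
  simp only at heq
  have h1 : i = i' := by
    have : i ∈ ({i', j'} : Finset (Fin k)) := heq ▸ mem_pair_self_left
    rcases Finset.mem_insert.mp this with h | h
    · exact h
    · rw [Finset.mem_singleton] at h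
      subst h
      exact absurd hi (Finset.disjoint_right.mp hd hj')
  have h2 : j = j' := by
    have : j ∈ ({i', j'} : Finset (Fin k)) := heq ▸ mem_pair_self_right
    rcases Finset.mem_insert.mp this with h | h
    · subst h
      exact absurd hj (Finset.disjoint_left.mp hd hi')
    · exact Finset.mem_singleton.mp h
  simp [h1, h2]

/-- triples with one element of each value 10, 01, 11 -/
def tripleSet : Finset (Finset (Fin k)) :=
  ((T A ![1,0] ×ˢ T A ![0,1]) ×ˢ T A ![1,1]).image
    (fun p => ({p.1.1, p.1.2, p.2} : Finset (Fin k)))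

lemma mem_tripleSet {S : Finset (Fin k)} :
    S ∈ tripleSet A ↔ ∃ x ∈ T A ![1,0], ∃ y ∈ T A ![0,1], ∃ z ∈ T A ![1,1], S = {x, y, z} := by
  simp only [tripleSet, Finset.mem_image, Finset.mem_product, Prod.exists]
  constructor
  · rintro ⟨x, y, z, ⟨⟨hx, hy⟩, hz⟩, rfl⟩; exact ⟨x, hx, y, hy, z, hz, rfl⟩
  · rintro ⟨x, hx, y, hy, z, hz, rfl⟩; exact ⟨x, y, z, ⟨⟨hx, hy⟩, hz⟩, rfl⟩

lemma card_tripleSet : (tripleSet A).card = aCount A ![1,0] * aCount A ![0,1] * aCount A ![1,1] := by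
  rw [tripleSet, Finset.card_image_of_injOn, Finset.card_product, Finset.card_product,
    card_T, card_T, card_T]
  rintro ⟨⟨x, y⟩, z⟩ h ⟨⟨x', y'⟩, z'⟩ h' heq
  simp only [Finset.mem_coe, Finset.mem_product] at h h'
  obtain ⟨⟨hx, hy⟩, hz⟩ := h
  obtain ⟨⟨hx', hy'⟩, hz'⟩ := h'
  rw [mem_T] at hx hy hz hx' hy' hz'
  simp only at heq
  have key : ∀ a : Fin k, a ∈ ({x, y, z} : Finset (Fin k)) ↔ a ∈ ({x', y', z'} : Finset (Fin k)) := by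
    intro a; rw [heq]
  have hxx : x = x' := by
    have := (key x).mp (by simp)
    simp only [Finset.mem_insert, Finset.mem_singleton] at this
    rcases this with h | h | h
    · exact h
    · subst h; rw [hy'] at hx; exact absurd hx (by decide)
    · subst h; rw [hz'] at hx; exact absurd hx (by decide)
  have hyy : y = y' := by
    have := (key y).mp (by simp)
    simp only [Finset.mem_insert, Finset.mem_singleton] at this
    rcases this with h | h | h
    · subst h; rw [hx'] at hy; exact absurd hy (by decide)
    · exact h
    · subst h; rw [hz'] at hy; exact absurd hy (by decide)
  have hzz : z = z' := by
    have := (key z).mp (by simp)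
    simp only [Finset.mem_insert, Finset.mem_singleton] at this
    rcases this with h | h | h
    · subst h; rw [hx'] at hz; exact absurd hz (by decide)
    · subst h; rw [hy'] at hz; exact absurd hz (by decide)
    · exact h
  simp [hxx, hyy, hzz]

set_option maxHeartbeats 1000000 in
set_option synthInstance.maxHeartbeats 400000 in
set_option synthInstance.maxSize 512 in
lemma triple_val_perm : ∀ u v w : Fin 2 → ZMod 2,
    (u ≠ v ∧ u ≠ w ∧ v ≠ w ∧ u ≠ ![0,0] ∧ v ≠ ![0,0] ∧ w ≠ ![0,0]) →
    ((u = ![1,0] ∧ v = ![0,1] ∧ w = ![1,1]) ∨ (u = ![1,0] ∧ v = ![1,1] ∧ w = ![0,1])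
      ∨ (u = ![0,1] ∧ v = ![1,0] ∧ w = ![1,1]) ∨ (u = ![0,1] ∧ v = ![1,1] ∧ w = ![1,0])
      ∨ (u = ![1,1] ∧ v = ![1,0] ∧ w = ![0,1]) ∨ (u = ![1,1] ∧ v = ![0,1] ∧ w = ![1,0])) := by
  decide

open Classical in
lemma filter1_eq :
    univ.filter (fun S : Finset (Fin k) => Mn A S ∧ S.card = 1) = Finset.powersetCard 1 univ := by
  ext S
  simp only [Finset.mem_filter, Finset.mem_univ, true_and, Finset.mem_powersetCard_univ]
  constructor
  · exact fun h => h.2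
  · intro h
    obtain ⟨i, rfl⟩ := Finset.card_eq_one.mp h
    exact ⟨mn_singleton A i, h⟩

open Classical in
lemma filter3_eq :
    univ.filter (fun S : Finset (Fin k) => Mn A S ∧ S.card = 3) = tripleSet A := by
  ext S
  simp only [Finset.mem_filter, Finset.mem_univ, true_and, mem_tripleSet]
  constructor
  · rintro ⟨hmn, hcard⟩
    obtain ⟨x, y, z, hxy, hxz, hyz, rfl⟩ := Finset.card_eq_three.mp hcard
    have hvals := (mn_triple A hxy hxz hyz).mp hmn
    have hperm := triple_val_perm (A x) (A y) (A z) hvals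
    rcases hperm with ⟨h1,h2,h3⟩|⟨h1,h2,h3⟩|⟨h1,h2,h3⟩|⟨h1,h2,h3⟩|⟨h1,h2,h3⟩|⟨h1,h2,h3⟩
    · exact ⟨x, (mem_T A).mpr h1, y, (mem_T A).mpr h2, z, (mem_T A).mpr h3, rfl⟩
    · exact ⟨x, (mem_T A).mpr h1, z, (mem_T A).mpr h3, y, (mem_T A).mpr h2,
        by ext a; simp only [Finset.mem_insert, Finset.mem_singleton]; tauto⟩
    · exact ⟨y, (mem_T A).mpr h2, x, (mem_T A).mpr h1, z, (mem_T A).mpr h3,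
        by ext a; simp only [Finset.mem_insert, Finset.mem_singleton]; tauto⟩
    · exact ⟨z, (mem_T A).mpr h3, x, (mem_T A).mpr h1, y, (mem_T A).mpr h2,
        by ext a; simp only [Finset.mem_insert, Finset.mem_singleton]; tauto⟩
    · exact ⟨y, (mem_T A).mpr h2, z, (mem_T A).mpr h3, x, (mem_T A).mpr h1,
        by ext a; simp only [Finset.mem_insert, Finset.mem_singleton]; tauto⟩
    · exact ⟨z, (mem_T A).mpr h3, y, (mem_T A).mpr h2, x, (mem_T A).mpr h1,
        by ext a; simp only [Finset.mem_insert, Finset.mem_singleton]; tauto⟩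
  · rintro ⟨x, hx, y, hy, z, hz, rfl⟩
    rw [mem_T] at hx hy hz
    have hxy : x ≠ y := fun h => by rw [h, hy] at hx; exact absurd hx (by decide)
    have hxz : x ≠ z := fun h => by rw [h, hz] at hx; exact absurd hx (by decide)
    have hyz : y ≠ z := fun h => by rw [h, hz] at hy; exact absurd hy (by decide)
    refine ⟨(mn_triple A hxy hxz hyz).mpr ?_, card_triple hxy hxz hyz⟩
    rw [hx, hy, hz]
    refine ⟨by decide, by decide, by decide, by decide, by decide, by decide⟩

lemma mn_of_pc2 {τ : Fin 2 → ZMod 2} (hτ : τ ≠ ![0,0]) {S : Finset (Fin k)}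
    (hsub : S ⊆ T A τ) (hcard : S.card = 2) : Mn A S := by
  obtain ⟨i, j, hij, rfl⟩ := Finset.card_eq_two.mp hcard
  have hi : A i = τ := (mem_T A).mp (hsub mem_pair_self_left)
  have hj : A j = τ := (mem_T A).mp (hsub mem_pair_self_right)
  refine (mn_pair A hij).mpr ((pair_val_char (A i) (A j)).mpr ?_)
  exact Or.inl ⟨hi.trans hj.symm, hi ▸ hτ⟩

lemma mn_of_pairSet {σ1 σ2 : Fin 2 → ZMod 2} {i j : Fin k}
    (hi : A i = σ1) (hj : A j = σ2)
    (hQ : (σ1 = ![0,1] ∧ σ2 = ![1,1]) ∨ (σ1 = ![1,0] ∧ σ2 = ![1,1])) :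
    Mn A {i, j} ∧ ({i, j} : Finset (Fin k)).card = 2 := by
  have hij : i ≠ j := by
    rintro rfl
    rw [hi] at hj
    rcases hQ with ⟨rfl, rfl⟩ | ⟨rfl, rfl⟩ <;> exact absurd hj (by decide)
  refine ⟨(mn_pair A hij).mpr ((pair_val_char (A i) (A j)).mpr ?_), Finset.card_pair hij⟩
  rw [hi, hj]
  rcases hQ with ⟨rfl, rfl⟩ | ⟨rfl, rfl⟩
  · exact Or.inr (Or.inl ⟨rfl, rfl⟩)
  · exact Or.inr (Or.inr (Or.inr (Or.inl ⟨rfl, rfl⟩)))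

open Classical in
lemma filter2_eq :
    univ.filter (fun S : Finset (Fin k) => Mn A S ∧ S.card = 2) =
      ((Finset.powersetCard 2 (T A ![1,0]) ∪ Finset.powersetCard 2 (T A ![0,1])
        ∪ Finset.powersetCard 2 (T A ![1,1]))
        ∪ pairSet (T A ![0,1]) (T A ![1,1])) ∪ pairSet (T A ![1,0]) (T A ![1,1]) := by
  ext S
  simp only [Finset.mem_filter, Finset.mem_univ, true_and, Finset.mem_union,
    Finset.mem_powersetCard, mem_pairSet]
  constructor
  · rintro ⟨hmn, hcard⟩
    obtain ⟨i, j, hij, rfl⟩ := Finset.card_eq_two.mp hcard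
    have hv := (pair_val_char (A i) (A j)).mp ((mn_pair A hij).mp hmn)
    have hsubτ : ∀ τ, A i = τ → A j = τ → ({i,j} : Finset (Fin k)) ⊆ T A τ := by
      intro τ h1 h2 a ha
      rcases Finset.mem_insert.mp ha with rfl | ha
      · exact (mem_T A).mpr h1
      · rw [Finset.mem_singleton] at ha
        subst ha
        exact (mem_T A).mpr h2
    rcases hv with ⟨heq, hne⟩ | ⟨h1, h2⟩ | ⟨h1, h2⟩ | ⟨h1, h2⟩ | ⟨h1, h2⟩
    · rcases zmod2vec_cases (A i) with h | h | h | h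
      · exact absurd h hne
      · exact Or.inl (Or.inl (Or.inl (Or.inl ⟨hsubτ _ h (heq ▸ h), hcard⟩)))
      · exact Or.inl (Or.inl (Or.inl (Or.inr ⟨hsubτ _ h (heq ▸ h), hcard⟩)))
      · exact Or.inl (Or.inl (Or.inr ⟨hsubτ _ h (heq ▸ h), hcard⟩))
    · exact Or.inl (Or.inr ⟨i, (mem_T A).mpr h1, j, (mem_T A).mpr h2, rfl⟩)
    · exact Or.inl (Or.inr ⟨j, (mem_T A).mpr h2, i, (mem_T A).mpr h1, Finset.pair_comm i j⟩)
    · exact Or.inr ⟨i, (mem_T A).mpr h1, j, (mem_T A).mpr h2, rfl⟩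
    · exact Or.inr ⟨j, (mem_T A).mpr h2, i, (mem_T A).mpr h1, Finset.pair_comm i j⟩
  · rintro ((((⟨hsub, hcard⟩ | ⟨hsub, hcard⟩) | ⟨hsub, hcard⟩) |
      ⟨i, hi, j, hj, rfl⟩) | ⟨i, hi, j, hj, rfl⟩)
    · exact ⟨mn_of_pc2 A (by decide) hsub hcard, hcard⟩
    · exact ⟨mn_of_pc2 A (by decide) hsub hcard, hcard⟩
    · exact ⟨mn_of_pc2 A (by decide) hsub hcard, hcard⟩
    · exact mn_of_pairSet A ((mem_T A).mp hi) ((mem_T A).mp hj) (Or.inl ⟨rfl, rfl⟩)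
    · exact mn_of_pairSet A ((mem_T A).mp hi) ((mem_T A).mp hj) (Or.inr ⟨rfl, rfl⟩)

lemma disj_pc2_pc2 {τ τ' : Fin 2 → ZMod 2} (h : τ ≠ τ') :
    Disjoint (Finset.powersetCard 2 (T A τ)) (Finset.powersetCard 2 (T A τ')) := by
  rw [Finset.disjoint_left]
  intro S hS hS'
  rw [Finset.mem_powersetCard] at hS hS'
  obtain ⟨a, ha⟩ : S.Nonempty := Finset.card_pos.mp (by omega)
  exact h (((mem_T A).mp (hS.1 ha)).symm.trans ((mem_T A).mp (hS'.1 ha)))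

lemma disj_pc2_pairSet {τ σ1 σ2 : Fin 2 → ZMod 2} (h : τ ≠ σ1 ∨ τ ≠ σ2) :
    Disjoint (Finset.powersetCard 2 (T A τ)) (pairSet (T A σ1) (T A σ2)) := by
  rw [Finset.disjoint_left]
  intro S hS hS'
  rw [Finset.mem_powersetCard] at hS
  obtain ⟨i, hi, j, hj, rfl⟩ := mem_pairSet.mp hS'
  rcases h with h | h
  · exact h (((mem_T A).mp (hS.1 mem_pair_self_left)).symm.trans ((mem_T A).mp hi))
  · exact h (((mem_T A).mp (hS.1 mem_pair_self_right)).symm.trans ((mem_T A).mp hj))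

lemma disj_pairSet_pairSet {σ1 σ2 ρ1 ρ2 : Fin 2 → ZMod 2} (h1 : σ1 ≠ ρ1) (h2 : σ1 ≠ ρ2) :
    Disjoint (pairSet (T A σ1) (T A σ2)) (pairSet (T A ρ1) (T A ρ2)) := by
  rw [Finset.disjoint_left]
  intro S hS hS'
  obtain ⟨i, hi, j, hj, rfl⟩ := mem_pairSet.mp hS
  obtain ⟨p, hp, q, hq, heq⟩ := mem_pairSet.mp hS'
  have : i ∈ ({p, q} : Finset (Fin k)) := heq ▸ mem_pair_self_left
  rcases Finset.mem_insert.mp this with rfl | hiq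
  · exact h1 (((mem_T A).mp hi).symm.trans ((mem_T A).mp hp))
  · rw [Finset.mem_singleton] at hiq
    subst hiq
    exact h2 (((mem_T A).mp hi).symm.trans ((mem_T A).mp hq))

lemma disj_T {τ τ' : Fin 2 → ZMod 2} (h : τ ≠ τ') : Disjoint (T A τ) (T A τ') := by
  rw [Finset.disjoint_left]
  intro a ha ha'
  exact h (((mem_T A).mp ha).symm.trans ((mem_T A).mp ha'))

open Classical in
lemma count_mn :
    (univ.filter (Mn A)).card =
      k + ((aCount A ![1,0]).choose 2 + (aCount A ![0,1]).choose 2 + (aCount A ![1,1]).choose 2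
        + aCount A ![0,1] * aCount A ![1,1] + aCount A ![1,0] * aCount A ![1,1])
      + aCount A ![1,0] * aCount A ![0,1] * aCount A ![1,1] := by
  have hsplit : univ.filter (Mn A) =
      (univ.filter (fun S => Mn A S ∧ S.card = 1) ∪ univ.filter (fun S => Mn A S ∧ S.card = 2))
        ∪ univ.filter (fun S => Mn A S ∧ S.card = 3) := by
    ext S
    simp only [Finset.mem_filter, Finset.mem_univ, true_and, Finset.mem_union]
    constructor
    · intro h
      rcases mn_card_cases A h with h1 | h1 | h1 <;> tauto
    · tauto
  have d12 : Disjoint (univ.filter (fun S : Finset (Fin k) => Mn A S ∧ S.card = 1))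
      (univ.filter (fun S : Finset (Fin k) => Mn A S ∧ S.card = 2)) := by
    rw [Finset.disjoint_left]
    intro S h1 h2
    rw [Finset.mem_filter] at h1 h2
    omega
  have d123 : Disjoint ((univ.filter (fun S : Finset (Fin k) => Mn A S ∧ S.card = 1))
      ∪ (univ.filter (fun S : Finset (Fin k) => Mn A S ∧ S.card = 2)))
      (univ.filter (fun S : Finset (Fin k) => Mn A S ∧ S.card = 3)) := by
    rw [Finset.disjoint_left]
    intro S h1 h2
    rw [Finset.mem_union, Finset.mem_filter, Finset.mem_filter] at h1
    rw [Finset.mem_filter] at h2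
    omega
  rw [hsplit, Finset.card_union_of_disjoint d123, Finset.card_union_of_disjoint d12]
  have hc1 : (univ.filter (fun S : Finset (Fin k) => Mn A S ∧ S.card = 1)).card = k := by
    rw [filter1_eq, Finset.card_powersetCard, Finset.card_univ, Fintype.card_fin,
      Nat.choose_one_right]
  have hc3 : (univ.filter (fun S : Finset (Fin k) => Mn A S ∧ S.card = 3)).card =
      aCount A ![1,0] * aCount A ![0,1] * aCount A ![1,1] := by
    rw [filter3_eq, card_tripleSet]
  have hc2 : (univ.filter (fun S : Finset (Fin k) => Mn A S ∧ S.card = 2)).card =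
      (aCount A ![1,0]).choose 2 + (aCount A ![0,1]).choose 2 + (aCount A ![1,1]).choose 2
        + aCount A ![0,1] * aCount A ![1,1] + aCount A ![1,0] * aCount A ![1,1] := by
    rw [filter2_eq]
    rw [Finset.card_union_of_disjoint, Finset.card_union_of_disjoint,
      Finset.card_union_of_disjoint, Finset.card_union_of_disjoint]
    · rw [Finset.card_powersetCard, Finset.card_powersetCard, Finset.card_powersetCard,
        card_pairSet (disj_T A (by decide)), card_pairSet (disj_T A (by decide))]
      simp only [card_T]
    · exact disj_pc2_pc2 A (by decide)
    · rw [Finset.disjoint_union_left]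
      exact ⟨disj_pc2_pc2 A (by decide), disj_pc2_pc2 A (by decide)⟩
    · rw [Finset.disjoint_union_left, Finset.disjoint_union_left]
      exact ⟨⟨disj_pc2_pairSet A (Or.inl (by decide)), disj_pc2_pairSet A (Or.inr (by decide))⟩,
        disj_pc2_pairSet A (Or.inl (by decide))⟩
    · rw [Finset.disjoint_union_left, Finset.disjoint_union_left, Finset.disjoint_union_left]
      refine ⟨⟨⟨disj_pc2_pairSet A ?_, disj_pc2_pairSet A ?_⟩, disj_pc2_pairSet A ?_⟩,
        disj_pairSet_pairSet A (by decide) (by decide)⟩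
      · exact Or.inr (by decide)
      · exact Or.inl (by decide)
      · exact Or.inl (by decide)
  rw [hc1, hc2, hc3]

lemma k_eq : k = aCount A ![0,0] + aCount A ![1,0] + aCount A ![0,1] + aCount A ![1,1] := by
  have huniv : (univ : Finset (Fin 2 → ZMod 2)) = {![0,0], ![1,0], ![0,1], ![1,1]} := by decide
  have h := Finset.card_eq_sum_card_fiberwise
    (f := A) (s := univ) (t := (univ : Finset (Fin 2 → ZMod 2))) (fun x _ => Finset.mem_univ _)
  rw [Finset.card_univ, Fintype.card_fin, huniv] at h
  rw [Finset.sum_insert (by decide), Finset.sum_insert (by decide),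
    Finset.sum_insert (by decide), Finset.sum_singleton] at h
  simp only [aCount]
  omega

end Stmt17

theorem stmt17 (k : ℕ) (A : Fin k → Fin 2 → ZMod 2)
    (a00 a10 a01 a11 : ℕ)
    (h00 : a00 = aCount A ![0, 0]) (h10 : a10 = aCount A ![1, 0])
    (h01 : a01 = aCount A ![0, 1]) (h11 : a11 = aCount A ![1, 1]) :
    (Mcode (genCode A) : ℚ) =
      (k : ℚ) + ((k : ℚ) - a00) * ((k : ℚ) - a00 - 1) / 2
        - (a10 : ℚ) * a01 + (a10 : ℚ) * a01 * a11 := by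
  have hk : (k : ℚ) = (a00 : ℚ) + a10 + a01 + a11 := by
    rw [h00, h10, h01, h11]
    exact_mod_cast congrArg (Nat.cast : ℕ → ℚ) (Stmt17.k_eq A)
  rw [Stmt17.mcode_eq_card, Stmt17.count_mn]
  rw [← h10, ← h01, ← h11]
  push_cast [Nat.cast_choose_two]
  rw [hk]
  ring
end

section
/- For every positive integer k, M_2(k+2, k) = k + k(k−1)/2 + ⌊(k−1)/3⌋·⌊k/3⌋·⌊(k+1)/3⌋. -/
open Finset

/-!
A `k`-dimensional code `C ≤ 𝔽₂^(k+2)` is the kernel of a surjection `𝔽₂^(k+2) → 𝔽₂²`, i.e. of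
`x ↦ ∑ xᵢ vᵢ` for columns `vᵢ ∈ 𝔽₂²` spanning `𝔽₂²`. The supports of minimal codewords are the
minimal sets of columns summing to zero: a zero column, two equal nonzero columns, or one column of
each of the three nonzero values. With `b_τ` columns equal to `τ`, this gives
`M(C) = b₀ + ∑_{τ ≠ 0} (b_τ choose 2) + b₁₀ b₀₁ b₁₁`, where surjectivity means that at least two of
the three nonzero values occur. Under `∑ b_τ = k + 2` this is largest for `b₀ = 0` and
`b₁₀ - 1, b₀₁ - 1, b₁₁ - 1` as equal as possible, i.e. `⌊(k-1)/3⌋, ⌊k/3⌋, ⌊(k+1)/3⌋`.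
-/

open Module Submodule

local notation "F₂²" => ZMod 2 × ZMod 2

theorem zmod_two_eq_zero_or_one (a : ZMod 2) : a = 0 ∨ a = 1 := by
  decide +revert

section Support

variable {ι : Type*} [Fintype ι] [DecidableEq ι]

def supportFinsetEquiv : (ι → ZMod 2) ≃ Finset ι where
  toFun x := {i | x i ≠ 0}
  invFun S i := if i ∈ S then 1 else 0
  left_inv x := by
    funext i
    rcases zmod_two_eq_zero_or_one (x i) with h | h <;> simp [h]
  right_inv S := by
    ext i
    by_cases h : i ∈ S <;> simp [h]

theorem coe_supportFinsetEquiv {n : ℕ} (x : Fin n → ZMod 2) :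
    (supportFinsetEquiv x : Set (Fin n)) = supp x := by
  ext i
  simp [supportFinsetEquiv, supp]

theorem piEquiv_apply_eq_sum_supportFinsetEquiv {M : Type*} [AddCommMonoid M]
    [Module (ZMod 2) M] (v : ι → M) (x : ι → ZMod 2) :
    piEquiv ι (ZMod 2) M v x = ∑ i ∈ supportFinsetEquiv x, v i := by
  rw [piEquiv_apply_apply, supportFinsetEquiv, Equiv.coe_fn_mk, sum_filter]
  refine sum_congr rfl fun i _ => ?_
  rcases zmod_two_eq_zero_or_one (x i) with h | h <;> simp [h]

end Support

section MinimalZeroSum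

variable {ι M : Type*} [AddCommMonoid M]

def IsMinimalZeroSum (v : ι → M) (S : Finset ι) : Prop :=
  S.Nonempty ∧ ∑ i ∈ S, v i = 0 ∧ ∀ T ⊂ S, T.Nonempty → ∑ i ∈ T, v i ≠ 0

theorem IsMinimalZeroSum.eq_of_subset {v : ι → M} {S T : Finset ι} (h : IsMinimalZeroSum v S)
    (hTS : T ⊆ S) (hT : T.Nonempty) (hsum : ∑ i ∈ T, v i = 0) : T = S := by
  by_contra hne
  exact h.2.2 T (ssubset_of_subset_of_ne hTS hne) hT hsum

theorem isMinimalZeroSum_singleton {v : ι → M} {i : ι} (h : v i = 0) :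
    IsMinimalZeroSum v {i} :=
  ⟨singleton_nonempty i, by simpa, fun _ hT hne => absurd (ssubset_singleton_iff.1 hT) hne.ne_empty⟩

theorem isMinimal_ker_piEquiv_iff [Module (ZMod 2) M] {n : ℕ} (v : Fin n → M)
    (c : Fin n → ZMod 2) :
    IsMinimal (LinearMap.ker (piEquiv (Fin n) (ZMod 2) M v)) c ↔
      IsMinimalZeroSum v (supportFinsetEquiv c) := by
  have hmem (x : Fin n → ZMod 2) :
      x ∈ LinearMap.ker (piEquiv (Fin n) (ZMod 2) M v) ↔ ∑ i ∈ supportFinsetEquiv x, v i = 0 := by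
    rw [LinearMap.mem_ker, piEquiv_apply_eq_sum_supportFinsetEquiv]
  have hne (x : Fin n → ZMod 2) : x ≠ 0 ↔ (supportFinsetEquiv x).Nonempty := by
    rw [nonempty_iff_ne_empty, show (∅ : Finset (Fin n)) = supportFinsetEquiv 0 by
      ext; simp [supportFinsetEquiv], supportFinsetEquiv.injective.ne_iff]
  simp only [IsMinimal, IsMinimalZeroSum, hmem, hne, ← coe_supportFinsetEquiv, coe_ssubset]
  refine ⟨fun ⟨hsum, hS, h⟩ => ⟨hS, hsum, fun T hTS hT hsumT => ?_⟩,
    fun ⟨hS, hsum, h⟩ => ⟨hsum, hS, fun c' hc' hne hss => h _ hss hne hc'⟩⟩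
  obtain ⟨c', rfl⟩ := supportFinsetEquiv.surjective T
  exact h c' hsumT hT hTS

end MinimalZeroSum

section Columns

variable {ι : Type*}

theorem eq_univ_erase_zero_of_sum_eq_zero :
    ∀ T : Finset F₂², 0 ∉ T → T.Nonempty → ∑ x ∈ T, x = 0 → T = univ.erase 0 := by
  decide

theorem image_eq_univ_erase_zero {v : ι → F₂²} {S : Finset ι} (hinj : Set.InjOn v S)
    (h0 : ∀ i ∈ S, v i ≠ 0) (hS : S.Nonempty) (hsum : ∑ i ∈ S, v i = 0) :
    S.image v = univ.erase 0 :=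
  eq_univ_erase_zero_of_sum_eq_zero _ (by simpa using h0) (hS.image v) (by rwa [sum_image hinj])

theorem ne_of_rainbow {v : ι → F₂²} {i j l : ι} (hi : v i = (1, 0)) (hj : v j = (0, 1))
    (hl : v l = (1, 1)) : i ≠ j ∧ i ≠ l ∧ j ≠ l := by
  refine ⟨?_, ?_, ?_⟩ <;> rintro rfl <;> simp_all

variable [DecidableEq ι]

theorem sum_rainbow {v : ι → F₂²} {i j l : ι} (hi : v i = (1, 0)) (hj : v j = (0, 1))
    (hl : v l = (1, 1)) : ∑ x ∈ {i, j, l}, v x = 0 := by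
  obtain ⟨hij, hil, hjl⟩ := ne_of_rainbow hi hj hl
  rw [sum_insert (by simp [hij, hil]), sum_pair hjl, hi, hj, hl]
  decide

theorem isMinimalZeroSum_rainbow {v : ι → F₂²} {i j l : ι} (hi : v i = (1, 0))
    (hj : v j = (0, 1)) (hl : v l = (1, 1)) : IsMinimalZeroSum v {i, j, l} := by
  have hinj : Set.InjOn v ({i, j, l} : Finset ι) := by
    intro x hx y hy hxy
    simp only [coe_insert, coe_singleton, Set.mem_insert_iff, Set.mem_singleton_iff] at hx hy
    rcases hx with rfl | rfl | rfl <;> rcases hy with rfl | rfl | rfl <;> simp_all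
  have h0 : ∀ x ∈ ({i, j, l} : Finset ι), v x ≠ 0 := by simp [hi, hj, hl]
  refine ⟨insert_nonempty _ _, sum_rainbow hi hj hl, fun T hTS hT hsum => hTS.ne ?_⟩
  have hinjT := hinj.mono (coe_subset.2 hTS.subset)
  -- `v` maps both `T` and `{i, j, l}` bijectively onto the three nonzero vectors
  refine eq_of_subset_of_card_le hTS.subset ?_
  rw [← card_image_of_injOn hinj, ← card_image_of_injOn hinjT,
    image_eq_univ_erase_zero hinj h0 (insert_nonempty _ _) (sum_rainbow hi hj hl),
    image_eq_univ_erase_zero hinjT (fun x hx => h0 x (hTS.subset hx)) hT hsum]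

theorem isMinimalZeroSum_pair {v : ι → F₂²} {i j : ι} (hij : i ≠ j) (hv : v i = v j)
    (h0 : v i ≠ 0) : IsMinimalZeroSum v {i, j} := by
  refine ⟨insert_nonempty _ _, ?_, fun T hTS hT hsum => ?_⟩
  · rw [sum_pair hij, ← hv]
    generalize v i = x
    decide +revert
  obtain ⟨x, rfl⟩ := card_eq_one.1 <| show #T = 1 by
    have := card_lt_card hTS
    rw [card_pair hij] at this
    have := hT.card_pos
    omega
  have hx : x ∈ ({i, j} : Finset ι) := hTS.subset (mem_singleton_self x)
  rw [sum_singleton] at hsum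
  simp only [mem_insert, mem_singleton] at hx
  rcases hx with rfl | rfl
  exacts [h0 hsum, h0 (hv ▸ hsum)]

theorem IsMinimalZeroSum.eq_singleton_or_pair_or_triple {v : ι → F₂²} {S : Finset ι}
    (h : IsMinimalZeroSum v S) :
    (∃ i, v i = 0 ∧ S = {i}) ∨ (∃ i j, i ≠ j ∧ v i = v j ∧ v i ≠ 0 ∧ S = {i, j}) ∨
      ∃ i j l, v i = (1, 0) ∧ v j = (0, 1) ∧ v l = (1, 1) ∧ S = {i, j, l} := by
  by_cases hzero : ∃ i ∈ S, v i = 0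
  · obtain ⟨i, hi, hvi⟩ := hzero
    exact Or.inl ⟨i, hvi,
      (h.eq_of_subset (singleton_subset_iff.2 hi) (singleton_nonempty i) (by simpa)).symm⟩
  push Not at hzero
  by_cases hrep : ∃ i ∈ S, ∃ j ∈ S, i ≠ j ∧ v i = v j
  · obtain ⟨i, hi, j, hj, hij, hv⟩ := hrep
    refine Or.inr (Or.inl ⟨i, j, hij, hv, hzero i hi, (h.eq_of_subset ?_ (insert_nonempty _ _)
      (isMinimalZeroSum_pair hij hv (hzero i hi)).2.1).symm⟩)
    simp [insert_subset_iff, hi, hj]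
  push Not at hrep
  have himage := image_eq_univ_erase_zero (fun i hi j hj hv => by_contra fun hij =>
    hrep i hi j hj hij hv) hzero h.1 h.2.1
  have hval (τ : F₂²) (hτ : τ ≠ 0) : ∃ i ∈ S, v i = τ := mem_image.1 (himage ▸ by simpa)
  obtain ⟨i, hiS, hi⟩ := hval (1, 0) (by decide)
  obtain ⟨j, hjS, hj⟩ := hval (0, 1) (by decide)
  obtain ⟨l, hlS, hl⟩ := hval (1, 1) (by decide)
  refine Or.inr (Or.inr ⟨i, j, l, hi, hj, hl, (h.eq_of_subset ?_ (insert_nonempty _ _)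
    (sum_rainbow hi hj hl)).symm⟩)
  simp [insert_subset_iff, hiS, hjS, hlS]

end Columns

section Counting

variable {ι : Type*} [Fintype ι]

def fibre {α : Type*} [DecidableEq α] (v : ι → α) (a : α) : Finset ι := {i | v i = a}

@[simp] theorem mem_fibre {α : Type*} [DecidableEq α] {v : ι → α} {a : α} {i : ι} :
    i ∈ fibre v a ↔ v i = a := by
  simp [fibre]

theorem sum_univ_zmod_two_prod {M : Type*} [AddCommMonoid M] (f : F₂² → M) :
    ∑ τ, f τ = f 0 + f (1, 0) + f (0, 1) + f (1, 1) := by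
  rw [show (univ : Finset F₂²) = {0, (1, 0), (0, 1), (1, 1)} by decide,
    sum_insert (by decide), sum_insert (by decide), sum_pair (by decide), add_assoc, add_assoc]

theorem card_fibres_add (v : ι → F₂²) :
    #(fibre v 0) + #(fibre v (1, 0)) + #(fibre v (0, 1)) + #(fibre v (1, 1)) =
      Fintype.card ι := by
  rw [← card_univ, card_eq_sum_card_fiberwise (s := univ) (t := univ) (fun i _ => mem_univ (v i)),
    sum_univ_zmod_two_prod]
  rfl

theorem exists_fin_card_fibre_eq {α : Type*} [Fintype α] [DecidableEq α] (b : α → ℕ) {n : ℕ}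
    (hn : ∑ a, b a = n) : ∃ v : Fin n → α, ∀ a, #(fibre v a) = b a := by
  let e : Fin n ≃ Σ a, Fin (b a) := (Fintype.equivFinOfCardEq (by simp [hn])).symm
  refine ⟨fun i => (e i).1, fun a => ?_⟩
  calc #(fibre (fun i => (e i).1) a) = #{x : Σ a, Fin (b a) | x.1 = a} :=
        card_equiv e (by simp)
    _ = b a := by
        rw [card_filter, Fintype.sum_sigma]
        simp [apply_ite card]

def zeroSingletons (v : ι → F₂²) : Finset (Finset ι) :=
  (fibre v 0).map ⟨singleton, singleton_injective⟩

theorem card_of_mem_zeroSingletons {v : ι → F₂²} {S : Finset ι} (hS : S ∈ zeroSingletons v) :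
    #S = 1 := by
  obtain ⟨i, -, rfl⟩ := mem_map.1 hS
  exact card_singleton i

variable [DecidableEq ι]

def equalPairs (v : ι → F₂²) : Finset (Finset ι) :=
  (univ.erase 0).biUnion fun τ => powersetCard 2 (fibre v τ)

def rainbowTriples (v : ι → F₂²) : Finset (Finset ι) :=
  (fibre v (1, 0) ×ˢ fibre v (0, 1) ×ˢ fibre v (1, 1)).image fun p => {p.1, p.2.1, p.2.2}

theorem setOf_isMinimalZeroSum (v : ι → F₂²) :
    {S | IsMinimalZeroSum v S} = ↑(zeroSingletons v ∪ equalPairs v ∪ rainbowTriples v) := by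
  ext S
  simp only [Set.mem_ofPred_eq, coe_union, Set.mem_union, mem_coe]
  refine ⟨fun h => ?_, ?_⟩
  · rcases h.eq_singleton_or_pair_or_triple with ⟨i, hi, rfl⟩ | ⟨i, j, hij, hv, h0, rfl⟩ |
      ⟨i, j, l, hi, hj, hl, rfl⟩
    · simp [zeroSingletons, hi]
    · refine Or.inl (Or.inr (mem_biUnion.2 ⟨v i, by simpa, mem_powersetCard.2 ⟨?_, card_pair hij⟩⟩))
      simp [insert_subset_iff, hv]
    · exact Or.inr (mem_image.2 ⟨(i, j, l), by simp [hi, hj, hl], rfl⟩)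
  · rintro ((h | h) | h)
    · obtain ⟨i, hi, rfl⟩ := by simpa [zeroSingletons] using h
      exact isMinimalZeroSum_singleton hi
    · obtain ⟨τ, hτ, hS⟩ := mem_biUnion.1 h
      obtain ⟨hsub, hcard⟩ := mem_powersetCard.1 hS
      obtain ⟨i, j, hij, rfl⟩ := card_eq_two.1 hcard
      have hvi : v i = τ := by simpa using hsub (mem_insert_self i {j})
      have hvj : v j = τ := by simpa using hsub (mem_insert_of_mem (mem_singleton_self j))
      exact isMinimalZeroSum_pair hij (hvi.trans hvj.symm) (hvi ▸ ne_of_mem_erase hτ)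
    · obtain ⟨⟨i, j, l⟩, hp, rfl⟩ := mem_image.1 h
      simp only [mem_product, mem_fibre] at hp
      exact isMinimalZeroSum_rainbow hp.1 hp.2.1 hp.2.2

theorem card_of_mem_equalPairs {v : ι → F₂²} {S : Finset ι} (hS : S ∈ equalPairs v) :
    #S = 2 := by
  obtain ⟨τ, -, hS⟩ := mem_biUnion.1 hS
  exact (mem_powersetCard.1 hS).2

theorem card_of_mem_rainbowTriples {v : ι → F₂²} {S : Finset ι} (hS : S ∈ rainbowTriples v) :
    #S = 3 := by
  obtain ⟨⟨i, j, l⟩, hp, rfl⟩ := mem_image.1 hS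
  simp only [mem_product, mem_fibre] at hp
  obtain ⟨hij, hil, hjl⟩ := ne_of_rainbow hp.1 hp.2.1 hp.2.2
  exact card_eq_three.2 ⟨i, j, l, hij, hil, hjl, rfl⟩

theorem card_equalPairs (v : ι → F₂²) :
    #(equalPairs v) = (#(fibre v (1, 0))).choose 2 + (#(fibre v (0, 1))).choose 2 +
      (#(fibre v (1, 1))).choose 2 := by
  rw [equalPairs, card_biUnion]
  · simp only [card_powersetCard]
    rw [show (univ.erase 0 : Finset F₂²) = {(1, 0), (0, 1), (1, 1)} by decide,
      sum_insert (by decide), sum_pair (by decide), add_assoc]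
  · intro τ _ σ _ hτσ
    refine disjoint_left.2 fun S hτ hσ => ?_
    obtain ⟨i, hi⟩ := card_pos.1 (by rw [(mem_powersetCard.1 hτ).2]; omega : 0 < #S)
    have := (mem_powersetCard.1 hτ).1 hi
    have := (mem_powersetCard.1 hσ).1 hi
    simp_all

theorem card_rainbowTriples (v : ι → F₂²) :
    #(rainbowTriples v) = #(fibre v (1, 0)) * #(fibre v (0, 1)) * #(fibre v (1, 1)) := by
  rw [rainbowTriples, card_image_of_injOn, card_product, card_product, mul_assoc]
  rintro ⟨i, j, l⟩ hp ⟨i', j', l'⟩ hp' h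
  simp only [coe_product, Set.mem_prod, mem_coe, mem_fibre] at hp hp'
  -- each of the three values picks out one element of the triple
  have key (τ : F₂²) := congrArg (filter (v · = τ)) h
  simp only [filter_insert, filter_singleton, hp.1, hp.2.1, hp.2.2, hp'.1, hp'.2.1, hp'.2.2] at key
  have h1 := key (1, 0)
  have h2 := key (0, 1)
  have h3 := key (1, 1)
  simp only [↓reduceIte, Prod.mk.injEq, zero_ne_one, one_ne_zero, and_self, and_false,
    insert_empty_eq, singleton_inj, and_true] at h1 h2 h3
  simp [h1, h2, h3]

end Counting

def minimalCount (b₀ b₁ b₂ b₃ : ℕ) : ℕ :=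
  b₀ + (b₁.choose 2 + b₂.choose 2 + b₃.choose 2) + b₁ * b₂ * b₃

theorem mcode_ker_piEquiv {n : ℕ} (v : Fin n → F₂²) :
    Mcode (LinearMap.ker (piEquiv (Fin n) (ZMod 2) F₂² v)) =
      minimalCount #(fibre v 0) #(fibre v (1, 0)) #(fibre v (0, 1)) #(fibre v (1, 1)) := by
  have hdisj₁ : Disjoint (zeroSingletons v) (equalPairs v) := disjoint_left.2 fun S h h' => by
    have := card_of_mem_zeroSingletons h
    have := card_of_mem_equalPairs h'
    omega
  have hdisj₂ : Disjoint (zeroSingletons v ∪ equalPairs v) (rainbowTriples v) :=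
    disjoint_left.2 fun S h h' => by
      have := card_of_mem_rainbowTriples h'
      rcases mem_union.1 h with h | h
      · have := card_of_mem_zeroSingletons h
        omega
      · have := card_of_mem_equalPairs h
        omega
  calc Mcode _ = Set.ncard (supportFinsetEquiv ⁻¹' {S | IsMinimalZeroSum v S}) := by
        rw [Mcode]
        congr 1
        ext c
        exact isMinimal_ker_piEquiv_iff v c
    _ = #(zeroSingletons v ∪ equalPairs v ∪ rainbowTriples v) := by
        rw [Set.ncard_preimage_of_injective_subset_range supportFinsetEquiv.injective (by simp),
          setOf_isMinimalZeroSum, Set.ncard_coe_finset]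
    _ = _ := by
        rw [card_union_of_disjoint hdisj₂, card_union_of_disjoint hdisj₁, zeroSingletons, card_map,
          card_equalPairs, card_rainbowTriples, minimalCount]

section LinearAlgebra

variable {K V ι : Type*} [Field K] [AddCommGroup V] [Module K V]

theorem exists_span_eq_top_ker_piEquiv_eq [FiniteDimensional K V] [Fintype ι]
    (C : Submodule K (ι → K)) (hC : finrank K C + finrank K V = Fintype.card ι) :
    ∃ v : ι → V, span K (Set.range v) = ⊤ ∧ LinearMap.ker (piEquiv ι K V v) = C := by
  have hquot : finrank K ((ι → K) ⧸ C) = finrank K V := by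
    have := C.finrank_quotient_add_finrank
    rw [finrank_fintype_fun_eq_card] at this
    omega
  obtain ⟨e⟩ := FiniteDimensional.nonempty_linearEquiv_of_finrank_eq hquot
  refine ⟨(piEquiv ι K V).symm (e.toLinearMap ∘ₗ C.mkQ), ?_, ?_⟩
  · rw [← surjective_piEquiv_apply_iff, LinearEquiv.apply_symm_apply]
    exact e.surjective.comp C.mkQ_surjective
  · rw [LinearEquiv.apply_symm_apply, LinearMap.ker_comp, e.ker, comap_bot, ker_mkQ]

theorem finrank_ker_piEquiv_add_finrank [Fintype ι] {v : ι → V}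
    (hv : span K (Set.range v) = ⊤) :
    finrank K (LinearMap.ker (piEquiv ι K V v)) + finrank K V = Fintype.card ι := by
  have := LinearMap.finrank_range_add_finrank_ker (piEquiv ι K V v)
  rw [range_piEquiv, hv, finrank_top, finrank_fintype_fun_eq_card] at this
  omega

theorem exists_notMem_span_singleton {v : ι → V} (hV : 1 < finrank K V)
    (hv : span K (Set.range v) = ⊤) (w : V) : ∃ i, v i ∉ K ∙ w := by
  by_contra! h
  have hle : (⊤ : Submodule K V) ≤ K ∙ w := hv ▸ span_le.2 (Set.range_subset_iff.2 h)
  have := (Submodule.finrank_mono hle).trans (finrank_span_le_card ({w} : Set V))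
  rw [finrank_top, Set.toFinset_singleton, card_singleton] at this
  omega

end LinearAlgebra

theorem pos_card_fibre_add_card_fibre {ι : Type*} [Fintype ι] {v : ι → F₂²} {w σ ρ : F₂²}
    (hcover : ∀ x : F₂², x = 0 ∨ x = w ∨ x = σ ∨ x = ρ) {i : ι} (hi : v i ∉ ZMod 2 ∙ w) :
    0 < #(fibre v σ) + #(fibre v ρ) := by
  rcases hcover (v i) with h | h | h | h
  · exact absurd (h ▸ zero_mem _) hi
  · exact absurd (mem_span_singleton_self w) (h ▸ hi)
  · exact Nat.add_pos_left (card_pos.2 ⟨i, mem_fibre.2 h⟩) _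
  · exact Nat.add_pos_right _ (card_pos.2 ⟨i, mem_fibre.2 h⟩)

section Arithmetic

theorem choose_two_add (a b : ℕ) : (a + b).choose 2 = a.choose 2 + b.choose 2 + a * b := by
  induction b with
  | zero => rfl
  | succ b ih =>
    rw [← add_assoc, Nat.choose_succ_succ', ih, Nat.choose_succ_succ', Nat.choose_one_right,
      Nat.choose_one_right]
    ring

theorem choose_two_succ (a : ℕ) : (a + 1).choose 2 = a.choose 2 + a := by
  simp [choose_two_add]

theorem minimalCount_zero_succ (c₁ c₂ c₃ : ℕ) :
    minimalCount 0 (c₁ + 1) (c₂ + 1) (c₃ + 1) =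
      (c₁ + c₂ + c₃ + 1) + (c₁ + c₂ + c₃ + 1).choose 2 + c₁ * c₂ * c₃ := by
  simp only [minimalCount, choose_two_succ, choose_two_add]
  ring

theorem minimalCount_succ_le (b c₁ c₂ c₃ : ℕ) :
    minimalCount b (c₁ + 1) (c₂ + 1) (c₃ + 1) ≤ minimalCount 0 (b + c₁ + 1) (c₂ + 1) (c₃ + 1) := by
  simp only [minimalCount, choose_two_succ, choose_two_add]
  exact Nat.le.intro (k := b.choose 2 + b * c₁ + b * (c₂ + 1) * (c₃ + 1)) (by ring)

theorem minimalCount_succ_succ_zero_le (b x y : ℕ) :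
    minimalCount b (x + 1) (y + 1) 0 ≤ (b + x + y) + (b + x + y).choose 2 := by
  simp only [minimalCount, choose_two_succ, choose_two_add, Nat.choose_zero_succ]
  exact Nat.le.intro (k := b.choose 2 + b * x + b * y + x * y) (by ring)

theorem mul_mul_le_of_le_of_le {s a b c : ℕ} (hab : a ≤ b) (hbc : b ≤ c) (hs : a + b + c = s) :
    a * b * c ≤ s / 3 * ((s + 1) / 3) * ((s + 2) / 3) := by
  induction hd : c - a using Nat.strong_induction_on generalizing a b c with
  | _ d ih =>
    by_cases hbal : c ≤ a + 1
    · rw [show s / 3 = a by omega, show (s + 1) / 3 = b by omega, show (s + 2) / 3 = c by omega]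
    obtain ⟨e, rfl⟩ : ∃ e, c = a + 2 + e := ⟨c - a - 2, by omega⟩
    -- moving one unit from the largest to the smallest factor does not decrease the product
    have hmove : a * b * (a + 2 + e) ≤ (a + 1) * b * (a + 1 + e) := by
      nlinarith [Nat.zero_le (b * e)]
    refine hmove.trans ?_
    rcases Nat.lt_or_ge b (a + 1) with hb | hb
    · calc (a + 1) * b * (a + 1 + e) = b * (a + 1) * (a + 1 + e) := by ring
        _ ≤ _ := ih _ (by omega) (by omega) (by omega) (by omega) rfl
    rcases Nat.lt_or_ge (a + 1 + e) b with hb' | hb'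
    · calc (a + 1) * b * (a + 1 + e) = (a + 1) * (a + 1 + e) * b := by ring
        _ ≤ _ := ih _ (by omega) (by omega) (by omega) (by omega) rfl
    · exact ih _ (by omega) hb hb' (by omega) rfl

theorem mul_mul_le_of_add_add_eq {s a b c : ℕ} (hs : a + b + c = s) :
    a * b * c ≤ s / 3 * ((s + 1) / 3) * ((s + 2) / 3) := by
  rcases le_total a b with h₁ | h₁ <;> rcases le_total b c with h₂ | h₂ <;>
    rcases le_total a c with h₃ | h₃ <;>
    first
    | linarith [mul_mul_le_of_le_of_le h₁ h₂ (s := s) (by omega)]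
    | linarith [mul_mul_le_of_le_of_le h₃ h₂ (s := s) (by omega)]
    | linarith [mul_mul_le_of_le_of_le h₁ h₃ (s := s) (by omega)]
    | linarith [mul_mul_le_of_le_of_le h₂ h₃ (s := s) (by omega)]
    | linarith [mul_mul_le_of_le_of_le h₃ h₁ (s := s) (by omega)]
    | linarith [mul_mul_le_of_le_of_le h₂ h₁ (s := s) (by omega)]

theorem minimalCount_le {k b₀ b₁ b₂ b₃ : ℕ} (hsum : b₀ + b₁ + b₂ + b₃ = k + 2)
    (h₁₂ : 0 < b₁ + b₂) (h₁₃ : 0 < b₁ + b₃) (h₂₃ : 0 < b₂ + b₃) :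
    minimalCount b₀ b₁ b₂ b₃ ≤ k + k.choose 2 + (k - 1) / 3 * (k / 3) * ((k + 1) / 3) := by
  have two_values (x y : ℕ) (hxy : b₀ + x + y = k) :
      minimalCount b₀ (x + 1) (y + 1) 0 ≤ k + k.choose 2 + (k - 1) / 3 * (k / 3) * ((k + 1) / 3) :=
    hxy ▸ (minimalCount_succ_succ_zero_le b₀ x y).trans (Nat.le_add_right _ _)
  rcases Nat.eq_zero_or_pos b₁ with rfl | h₁
  · obtain ⟨x, rfl⟩ : ∃ x, b₂ = x + 1 := ⟨b₂ - 1, by omega⟩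
    obtain ⟨y, rfl⟩ : ∃ y, b₃ = y + 1 := ⟨b₃ - 1, by omega⟩
    simpa [minimalCount, add_comm] using two_values x y (by omega)
  rcases Nat.eq_zero_or_pos b₂ with rfl | h₂
  · obtain ⟨x, rfl⟩ : ∃ x, b₁ = x + 1 := ⟨b₁ - 1, by omega⟩
    obtain ⟨y, rfl⟩ : ∃ y, b₃ = y + 1 := ⟨b₃ - 1, by omega⟩
    simpa [minimalCount] using two_values x y (by omega)
  rcases Nat.eq_zero_or_pos b₃ with rfl | h₃
  · obtain ⟨x, rfl⟩ : ∃ x, b₁ = x + 1 := ⟨b₁ - 1, by omega⟩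
    obtain ⟨y, rfl⟩ : ∃ y, b₂ = y + 1 := ⟨b₂ - 1, by omega⟩
    exact two_values x y (by omega)
  obtain ⟨c₁, rfl⟩ : ∃ c, b₁ = c + 1 := ⟨b₁ - 1, by omega⟩
  obtain ⟨c₂, rfl⟩ : ∃ c, b₂ = c + 1 := ⟨b₂ - 1, by omega⟩
  obtain ⟨c₃, rfl⟩ : ∃ c, b₃ = c + 1 := ⟨b₃ - 1, by omega⟩
  have hprod := mul_mul_le_of_add_add_eq (a := b₀ + c₁) (b := c₂) (c := c₃) (s := k - 1) (by omega)
  rw [show k - 1 + 1 = k by omega, show k - 1 + 2 = k + 1 by omega] at hprod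
  calc minimalCount b₀ (c₁ + 1) (c₂ + 1) (c₃ + 1)
      ≤ minimalCount 0 (b₀ + c₁ + 1) (c₂ + 1) (c₃ + 1) := minimalCount_succ_le b₀ c₁ c₂ c₃
    _ = k + k.choose 2 + (b₀ + c₁) * c₂ * c₃ := by
        rw [minimalCount_zero_succ, show b₀ + c₁ + c₂ + c₃ + 1 = k by omega]
    _ ≤ _ := Nat.add_le_add_left hprod _

end Arithmetic

theorem mcode_le {k : ℕ} (C : Submodule (ZMod 2) (Fin (k + 2) → ZMod 2))
    (hC : finrank (ZMod 2) C = k) :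
    Mcode C ≤ k + k.choose 2 + (k - 1) / 3 * (k / 3) * ((k + 1) / 3) := by
  obtain ⟨v, hv, rfl⟩ := exists_span_eq_top_ker_piEquiv_eq (V := F₂²) C (by simp [hC])
  have hV : 1 < finrank (ZMod 2) F₂² := by simp
  obtain ⟨i, hi⟩ := exists_notMem_span_singleton hV hv (1, 1)
  obtain ⟨j, hj⟩ := exists_notMem_span_singleton hV hv (0, 1)
  obtain ⟨l, hl⟩ := exists_notMem_span_singleton hV hv (1, 0)
  rw [mcode_ker_piEquiv]
  exact minimalCount_le (by simpa using card_fibres_add v)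
    (pos_card_fibre_add_card_fibre (by decide) hi) (pos_card_fibre_add_card_fibre (by decide) hj)
    (pos_card_fibre_add_card_fibre (by decide) hl)

theorem exists_mcode_eq {k : ℕ} (hk : 0 < k) :
    ∃ C : Submodule (ZMod 2) (Fin (k + 2) → ZMod 2), finrank (ZMod 2) C = k ∧
      Mcode C = k + k.choose 2 + (k - 1) / 3 * (k / 3) * ((k + 1) / 3) := by
  let b : F₂² → ℕ := fun τ => if τ = 0 then 0 else if τ = (1, 0) then (k - 1) / 3 + 1
    else if τ = (0, 1) then k / 3 + 1 else (k + 1) / 3 + 1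
  obtain ⟨v, hv⟩ := exists_fin_card_fibre_eq b (n := k + 2) <| by
    rw [sum_univ_zmod_two_prod]
    simp only [↓reduceIte, Prod.mk_eq_zero, one_ne_zero, and_true, zero_add, and_false,
      Prod.mk.injEq, zero_ne_one, and_self, b]
    omega
  have h0 : #(fibre v 0) = 0 := by simp [hv, b]
  have h10 : #(fibre v (1, 0)) = (k - 1) / 3 + 1 := by simp [hv, b]
  have h01 : #(fibre v (0, 1)) = k / 3 + 1 := by simp [hv, b]
  have h11 : #(fibre v (1, 1)) = (k + 1) / 3 + 1 := by simp [hv, b]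
  have hspan : span (ZMod 2) (Set.range v) = ⊤ := by
    obtain ⟨i, hi⟩ := card_pos.1 (h10 ▸ Nat.succ_pos _ : 0 < #(fibre v (1, 0)))
    obtain ⟨j, hj⟩ := card_pos.1 (h01 ▸ Nat.succ_pos _ : 0 < #(fibre v (0, 1)))
    refine eq_top_iff.2 ((Basis.finTwoProd (ZMod 2)).span_eq ▸ span_mono ?_)
    rintro _ ⟨m, rfl⟩
    fin_cases m
    exacts [⟨i, by simpa using hi⟩, ⟨j, by simpa using hj⟩]
  refine ⟨LinearMap.ker (piEquiv (Fin (k + 2)) (ZMod 2) F₂² v), ?_, ?_⟩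
  · have := finrank_ker_piEquiv_add_finrank hspan
    simp only [finrank_prod, finrank_self, Nat.reduceAdd, Fintype.card_fin,
      Nat.add_right_cancel_iff] at this
    omega
  · rw [mcode_ker_piEquiv, h0, h10, h01, h11, minimalCount_zero_succ,
      show (k - 1) / 3 + k / 3 + (k + 1) / 3 + 1 = k by omega]

theorem stmt18 (k : ℕ) (hk : 0 < k) :
    M2 (k + 2) k = k + k * (k - 1) / 2 + ((k - 1) / 3) * (k / 3) * ((k + 1) / 3) := by
  rw [← Nat.choose_two_right, M2]
  obtain ⟨C, hC, hM⟩ := exists_mcode_eq hk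
  exact IsGreatest.csSup_eq ⟨⟨C, hC, hM⟩, fun _ ⟨C', hC', hM'⟩ => hM' ▸ mcode_le C' hC'⟩
end
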